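/- arXiv:1912.05426 — 9 statements merged into one kernel-verified Lean document; each statement's English description precedes it below -/
import Mathlib

section
/- For q > 1, the function f(p) = (1/(1-q))·(1 − (∑_j p_j^{1/q})^q) is concave on the probability simplex in ℝ^d. -/
open Finset Real

/-- Superadditivity of `x ↦ (∑ x_j ^ s)^(1/s)` for `0 < s < 1`. -/
lemma tsallis_aux_superadd {d : ℕ} {s : ℝ} (hs0 : 0 < s) (hs1 : s < 1) (a b : Fin d → ℝ)
    (ha : ∀ j, 0 ≤ a j) (hb : ∀ j, 0 ≤ b j)
    (hA : 0 < ∑ j, a j ^ s) (hB : 0 < ∑ j, b j ^ s) :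
    (∑ j, a j ^ s) ^ (1/s) + (∑ j, b j ^ s) ^ (1/s) ≤ (∑ j, (a j + b j) ^ s) ^ (1/s) := by
  set A := (∑ j, a j ^ s) ^ (1/s) with hAdef
  set B := (∑ j, b j ^ s) ^ (1/s) with hBdef
  have hApos : 0 < A := Real.rpow_pos_of_pos hA _
  have hBpos : 0 < B := Real.rpow_pos_of_pos hB _
  have hABpos : 0 < A + B := by linarith
  have hAs : A ^ s = ∑ j, a j ^ s := by
    rw [hAdef, ← Real.rpow_mul hA.le, one_div_mul_cancel hs0.ne', Real.rpow_one]
  have hBs : B ^ s = ∑ j, b j ^ s := by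
    rw [hBdef, ← Real.rpow_mul hB.le, one_div_mul_cancel hs0.ne', Real.rpow_one]
  have hpt : ∀ j, (A+B)^s * ((A/(A+B)) * (a j / A)^s + (B/(A+B)) * (b j / B)^s)
      ≤ (a j + b j)^s := by
    intro j
    have hconc := (Real.concaveOn_rpow hs0.le hs1.le).2
      (Set.mem_Ici.2 (div_nonneg (ha j) hApos.le))
      (Set.mem_Ici.2 (div_nonneg (hb j) hBpos.le))
      (div_nonneg hApos.le hABpos.le) (div_nonneg hBpos.le hABpos.le)
      (by field_simp)
    simp only [smul_eq_mul] at hconc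
    have hmid : A/(A+B) * (a j / A) + B/(A+B) * (b j / B) = (a j + b j)/(A+B) := by
      field_simp
    rw [hmid] at hconc
    rw [Real.div_rpow (add_nonneg (ha j) (hb j)) hABpos.le] at hconc
    calc (A+B)^s * ((A/(A+B)) * (a j / A)^s + (B/(A+B)) * (b j / B)^s)
        ≤ (A+B)^s * ((a j + b j)^s / (A+B)^s) := by
          apply mul_le_mul_of_nonneg_left hconc (by positivity)
      _ = (a j + b j)^s := by field_simp
  have hsum : (A+B)^s ≤ ∑ j, (a j + b j)^s := by
    calc (A+B)^s = (A+B)^s * ((A/(A+B)) * (∑ j, (a j / A)^s) + (B/(A+B)) * (∑ j, (b j / B)^s)) := by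
          have h1 : ∑ j, (a j / A)^s = 1 := by
            simp_rw [Real.div_rpow (ha _) hApos.le, ← Finset.sum_div, ← hAs]
            field_simp
          have h2 : ∑ j, (b j / B)^s = 1 := by
            simp_rw [Real.div_rpow (hb _) hBpos.le, ← Finset.sum_div, ← hBs]
            field_simp
          rw [h1, h2]; field_simp
      _ = ∑ j, (A+B)^s * ((A/(A+B)) * (a j / A)^s + (B/(A+B)) * (b j / B)^s) := by
          rw [Finset.mul_sum, Finset.mul_sum, ← Finset.sum_add_distrib, Finset.mul_sum]
      _ ≤ ∑ j, (a j + b j)^s := Finset.sum_le_sum fun j _ => hpt j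
  have := Real.rpow_le_rpow (by positivity) hsum (by positivity : (0:ℝ) ≤ 1/s)
  rwa [← Real.rpow_mul hABpos.le, mul_one_div_cancel hs0.ne', Real.rpow_one] at this

/-- Concavity of f(p) = (1/(1-q))·(1 − (∑_j p_j^{1/q})^q) on the probability simplex, q > 1. -/
theorem tsallis_coherenceI_function_concave (d : ℕ) (q t : ℝ) (hq : 1 < q)
    (p r : Fin d → ℝ) (hp : ∀ j, 0 ≤ p j) (hpsum : ∑ j, p j = 1)
    (hr : ∀ j, 0 ≤ r j) (hrsum : ∑ j, r j = 1)
    (ht0 : 0 ≤ t) (ht1 : t ≤ 1) :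
    t * ((1 / (1 - q)) * (1 - (∑ j, p j ^ (1 / q)) ^ q))
      + (1 - t) * ((1 / (1 - q)) * (1 - (∑ j, r j ^ (1 / q)) ^ q))
      ≤ (1 / (1 - q)) * (1 - (∑ j, (t * p j + (1 - t) * r j) ^ (1 / q)) ^ q) := by
  rcases eq_or_lt_of_le ht0 with h0 | h0
  · simp [← h0]
  rcases eq_or_lt_of_le ht1 with h1 | h1
  · simp [h1]
  have hq0 : 0 < q := by linarith
  set s : ℝ := 1 / q with hsdef
  have hs0 : 0 < s := by positivity
  have hs1 : s < 1 := by rw [hsdef, div_lt_one hq0]; linarith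
  have hq_eq : 1 / s = q := by rw [hsdef, one_div_one_div]
  -- positivity of the power sums
  have hpos : ∀ (x : Fin d → ℝ), (∀ j, 0 ≤ x j) → (∑ j, x j = 1) → 0 < ∑ j, x j ^ s := by
    intro x hx hxs
    obtain ⟨j, hj⟩ : ∃ j, 0 < x j := by
      by_contra h
      push_neg at h
      have : ∑ j, x j = 0 := Finset.sum_eq_zero fun j _ => le_antisymm (h j) (hx j)
      rw [this] at hxs; norm_num at hxs
    exact Finset.sum_pos' (fun i _ => Real.rpow_nonneg (hx i) s)
      ⟨j, Finset.mem_univ j, Real.rpow_pos_of_pos hj s⟩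
  have hPp := hpos p hp hpsum
  have hPr := hpos r hr hrsum
  have ht1' : 0 < 1 - t := by linarith
  -- apply superadditivity to a = t • p, b = (1-t) • r
  have hAsum : ∑ j, (t * p j) ^ s = t ^ s * ∑ j, p j ^ s := by
    rw [Finset.mul_sum]
    exact Finset.sum_congr rfl fun j _ => Real.mul_rpow h0.le (hp j)
  have hBsum : ∑ j, ((1 - t) * r j) ^ s = (1 - t) ^ s * ∑ j, r j ^ s := by
    rw [Finset.mul_sum]
    exact Finset.sum_congr rfl fun j _ => Real.mul_rpow ht1'.le (hr j)
  have hkey := tsallis_aux_superadd hs0 hs1 (fun j => t * p j) (fun j => (1 - t) * r j)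
    (fun j => mul_nonneg h0.le (hp j)) (fun j => mul_nonneg ht1'.le (hr j))
    (by rw [hAsum]; positivity) (by rw [hBsum]; positivity)
  rw [hAsum, hBsum] at hkey
  have hA' : (t ^ s * ∑ j, p j ^ s) ^ (1/s) = t * (∑ j, p j ^ s) ^ (1/s) := by
    rw [Real.mul_rpow (by positivity) hPp.le, ← Real.rpow_mul h0.le,
      mul_one_div_cancel hs0.ne', Real.rpow_one]
  have hB' : ((1 - t) ^ s * ∑ j, r j ^ s) ^ (1/s) = (1 - t) * (∑ j, r j ^ s) ^ (1/s) := by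
    rw [Real.mul_rpow (by positivity) hPr.le, ← Real.rpow_mul ht1'.le,
      mul_one_div_cancel hs0.ne', Real.rpow_one]
  rw [hA', hB', hq_eq] at hkey
  -- hkey : t * Gp + (1-t) * Gr ≤ Gm
  have hc : 1 / (1 - q) < 0 := div_neg_of_pos_of_neg one_pos (by linarith)
  nlinarith [mul_nonneg (neg_nonneg.2 hc.le) (sub_nonneg.2 hkey)]
end

section
/- For q ∈ (0,1) and any probability vector p in ℝ^d, the quantity g(q) = ∑_j p_j^q + (∑_j p_j^{1/q})^q − 2 is nonnegative. Equivalently, on pure states C_q^I(ψ) ≤ C_q^III(ψ) for q ∈ (0,1). -/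
/-!
Apply Hölder's inequality with the conjugate exponents `1 + q` and `(1 + q) / q` to the
factorisation `p_j = p_j ^ (q / (1 + q)) * p_j ^ (1 / (1 + q))`: this gives
`1 = (∑ p_j) ^ (1 + q) ≤ (∑ p_j ^ q) * (∑ p_j ^ (1 / q)) ^ q`.
Two nonnegative numbers whose product is at least `1` have sum at least `2`.
-/

open Finset Real

theorem two_le_add_of_one_le_mul {α : Type*} [Field α] [LinearOrder α] [IsStrictOrderedRing α]
    {a b : α} (ha : 0 ≤ a) (hb : 0 ≤ b) (hab : 1 ≤ a * b) : 2 ≤ a + b := by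
  nlinarith [sq_nonneg (a - b)]

theorem Real.sum_rpow_one_add_le_sum_rpow_mul_sum_rpow_inv_rpow {ι : Type*} (s : Finset ι)
    {f : ι → ℝ} (hf : ∀ i ∈ s, 0 ≤ f i) {q : ℝ} (hq : 0 < q) :
    (∑ i ∈ s, f i) ^ (1 + q) ≤ (∑ i ∈ s, f i ^ q) * (∑ i ∈ s, f i ^ (1 / q)) ^ q := by
  have h1q : 0 < 1 + q := by linarith
  have hconj : (1 + q).HolderConjugate ((1 + q) / q) :=
    holderConjugate_iff.mpr ⟨by linarith, by field_simp⟩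
  have hsplit : ∀ i ∈ s, f i ^ (q / (1 + q)) * f i ^ (1 / (1 + q)) = f i := fun i hi => by
    rw [← rpow_add' (hf i hi) (by positivity), ← add_div, add_comm q 1, div_self h1q.ne', rpow_one]
  have hfirst : ∀ i ∈ s, (f i ^ (q / (1 + q))) ^ (1 + q) = f i ^ q := fun i hi => by
    rw [← rpow_mul (hf i hi), div_mul_cancel₀ q h1q.ne']
  have hsecond : ∀ i ∈ s, (f i ^ (1 / (1 + q))) ^ ((1 + q) / q) = f i ^ (1 / q) := fun i hi => by
    rw [← rpow_mul (hf i hi)]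
    congr 1
    field_simp
  have holder := inner_le_Lp_mul_Lq_of_nonneg s hconj
    (fun i hi => rpow_nonneg (hf i hi) (q / (1 + q)))
    (fun i hi => rpow_nonneg (hf i hi) (1 / (1 + q)))
  rw [sum_congr rfl hsplit, sum_congr rfl hfirst, sum_congr rfl hsecond] at holder
  have hS : 0 ≤ ∑ i ∈ s, f i ^ q := sum_nonneg fun i hi => rpow_nonneg (hf i hi) q
  have hT : 0 ≤ ∑ i ∈ s, f i ^ (1 / q) := sum_nonneg fun i hi => rpow_nonneg (hf i hi) _
  calc (∑ i ∈ s, f i) ^ (1 + q)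
      ≤ ((∑ i ∈ s, f i ^ q) ^ (1 / (1 + q)) *
          (∑ i ∈ s, f i ^ (1 / q)) ^ (1 / ((1 + q) / q))) ^ (1 + q) :=
        rpow_le_rpow (sum_nonneg hf) holder h1q.le
    _ = (∑ i ∈ s, f i ^ q) * (∑ i ∈ s, f i ^ (1 / q)) ^ q := by
        rw [mul_rpow (rpow_nonneg hS _) (rpow_nonneg hT _), ← rpow_mul hS, ← rpow_mul hT,
          one_div_mul_cancel h1q.ne', rpow_one]
        congr 2
        field_simp

theorem tsallis_coherenceI_le_coherenceIII_general (d : ℕ) (q : ℝ) (hq0 : 0 < q)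
    (p : Fin d → ℝ) (hp : ∀ j, 0 ≤ p j) (hsum : ∑ j, p j = 1) :
    0 ≤ (∑ j, p j ^ q) + (∑ j, p j ^ (1 / q)) ^ q - 2 := by
  have hprod : 1 ≤ (∑ j, p j ^ q) * (∑ j, p j ^ (1 / q)) ^ q := by
    simpa [hsum] using
      sum_rpow_one_add_le_sum_rpow_mul_sum_rpow_inv_rpow univ (fun j _ => hp j) hq0
  have htwo : 2 ≤ (∑ j, p j ^ q) + (∑ j, p j ^ (1 / q)) ^ q :=
    two_le_add_of_one_le_mul (sum_nonneg fun j _ => rpow_nonneg (hp j) q)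
      (rpow_nonneg (sum_nonneg fun j _ => rpow_nonneg (hp j) _) q) hprod
  linarith

/-- For q ∈ (0,1) and a probability vector p: ∑_j p_j^q + (∑_j p_j^{1/q})^q − 2 ≥ 0,
i.e. on pure states C_q^I ≤ C_q^III. -/
theorem tsallis_coherenceI_le_coherenceIII (d : ℕ) (q : ℝ) (hq0 : 0 < q) (hq1 : q < 1)
    (p : Fin d → ℝ) (hp : ∀ j, 0 ≤ p j) (hsum : ∑ j, p j = 1) :
    0 ≤ (∑ j, p j ^ q) + (∑ j, p j ^ (1 / q)) ^ q - 2 :=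
  tsallis_coherenceI_le_coherenceIII_general d q hq0 p hp hsum
end

section
/- Let q ∈ (0,1) ∪ (1,2], let λ_k ≥ 0 with ∑_k λ_k = 1, and for each k let p^{(k)} be a probability vector in ℝ^d. Then (1/(1-q))·(1 − (∑_j (∑_k λ_k^q p^{(k)}_j)^{1/q})^q) ≤ ∑_k λ_k · (1/(1-q))·(1 − (∑_j (p^{(k)}_j)^{1/q})^q). That is, C_q^I evaluated on a mixture is at most the corresponding convex combination, so C_q^I(ρ) ≤ C_q^IV(ρ). -/
/-!
The map `g x = (1 - x^q) / (1 - q)` is convex on `[0, ∞)`. With `Tₖ = ∑ⱼ pₖⱼ^(1/q)` and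
`S = ∑ⱼ (∑ₖ λₖ^q pₖⱼ)^(1/q)`, the identity `(λₖ^q pₖⱼ)^(1/q) = λₖ pₖⱼ^(1/q)` and super-
(for `q < 1`) or subadditivity (for `q > 1`) of `x ↦ x^(1/q)` put `S` on the side of `∑ₖ λₖ Tₖ`
where `g` is smaller, since `g` is antitone for `q < 1` and monotone for `q > 1`. Hence
`g S ≤ g (∑ₖ λₖ Tₖ) ≤ ∑ₖ λₖ g Tₖ`, the second step by Jensen.
-/

open Finset Set

namespace Real

lemma rpow_sum_le_sum_rpow {ι : Type*} (s : Finset ι) (a : ι → ℝ) {r : ℝ} (hr0 : 0 < r)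
    (hr1 : r ≤ 1) (ha : ∀ i ∈ s, 0 ≤ a i) :
    (∑ i ∈ s, a i) ^ r ≤ ∑ i ∈ s, a i ^ r :=
  le_sum_of_subadditive_on_pred (· ^ r) (0 ≤ ·) (zero_rpow hr0.ne').le
    (fun _ _ hx hy => rpow_add_le_add_rpow hx hy hr0.le hr1)
    (fun _ _ => add_nonneg) a ha

lemma sum_rpow_le_rpow_sum {ι : Type*} (s : Finset ι) (a : ι → ℝ) {r : ℝ} (hr : 1 ≤ r)
    (ha : ∀ i ∈ s, 0 ≤ a i) :
    ∑ i ∈ s, a i ^ r ≤ (∑ i ∈ s, a i) ^ r := by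
  have h := le_sum_of_subadditive_on_pred (fun x : ℝ => -x ^ r) (0 ≤ ·)
    (by simp [zero_rpow (by positivity : r ≠ 0)])
    (fun x y hx hy => by linarith [add_rpow_le_rpow_add hx hy hr])
    (fun _ _ => add_nonneg) a ha
  simpa only [sum_neg_distrib, neg_le_neg_iff] using h

lemma rpow_mul_rpow_one_div {a x q : ℝ} (ha : 0 ≤ a) (hx : 0 ≤ x) (hq : q ≠ 0) :
    (a ^ q * x) ^ (1 / q) = a * x ^ (1 / q) := by
  rw [mul_rpow (rpow_nonneg ha q) hx, ← rpow_mul ha, mul_one_div_cancel hq, rpow_one]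

end Real

open Real

section Mixing

variable {ι κ : Type*} [Fintype ι] [Fintype κ] {q : ℝ} {w : κ → ℝ} {p : κ → ι → ℝ}

lemma sum_mul_sum_rpow_eq (hq : q ≠ 0) (hw : ∀ k, 0 ≤ w k) (hp : ∀ k i, 0 ≤ p k i) :
    ∑ k, w k * ∑ i, p k i ^ (1 / q) = ∑ i, ∑ k, (w k ^ q * p k i) ^ (1 / q) := by
  simp only [mul_sum, rpow_mul_rpow_one_div (hw _) (hp _ _) hq]
  exact sum_comm

lemma sum_mul_sum_rpow_le_sum_rpow_sum (hq0 : 0 < q) (hq1 : q ≤ 1)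
    (hw : ∀ k, 0 ≤ w k) (hp : ∀ k i, 0 ≤ p k i) :
    ∑ k, w k * ∑ i, p k i ^ (1 / q) ≤ ∑ i, (∑ k, w k ^ q * p k i) ^ (1 / q) := by
  rw [sum_mul_sum_rpow_eq hq0.ne' hw hp]
  gcongr with i
  exact sum_rpow_le_rpow_sum _ _ (one_le_one_div hq0 hq1)
    fun k _ => mul_nonneg (rpow_nonneg (hw k) q) (hp k i)

lemma sum_rpow_sum_le_sum_mul_sum_rpow (hq : 1 ≤ q) (hw : ∀ k, 0 ≤ w k)
    (hp : ∀ k i, 0 ≤ p k i) :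
    ∑ i, (∑ k, w k ^ q * p k i) ^ (1 / q) ≤ ∑ k, w k * ∑ i, p k i ^ (1 / q) := by
  have hq0 : 0 < q := by linarith
  rw [sum_mul_sum_rpow_eq hq0.ne' hw hp]
  gcongr with i
  exact rpow_sum_le_sum_rpow _ _ (by positivity) (div_le_one_of_le₀ hq hq0.le)
    fun k _ => mul_nonneg (rpow_nonneg (hw k) q) (hp k i)

end Mixing

noncomputable def tsallisMap (q x : ℝ) : ℝ := 1 / (1 - q) * (1 - x ^ q)

section TsallisMap

variable {q : ℝ}

lemma antitoneOn_tsallisMap (hq0 : 0 ≤ q) (hq1 : q ≤ 1) : AntitoneOn (tsallisMap q) (Ici 0) :=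
  fun _ hx _ _ hxy => mul_le_mul_of_nonneg_left
    (sub_le_sub_left (rpow_le_rpow hx hxy hq0) 1) (one_div_nonneg.2 (sub_nonneg.2 hq1))

lemma monotoneOn_tsallisMap (hq : 1 ≤ q) : MonotoneOn (tsallisMap q) (Ici 0) :=
  fun _ hx _ _ hxy => mul_le_mul_of_nonpos_left
    (sub_le_sub_left (rpow_le_rpow hx hxy (by linarith)) 1)
    (one_div_nonpos.2 (sub_nonpos.2 hq))

lemma convexOn_tsallisMap (hq : 0 ≤ q) : ConvexOn ℝ (Ici 0) (tsallisMap q) := by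
  rcases le_total q 1 with hq1 | hq1
  · refine ((neg_convexOn_iff.2 (concaveOn_rpow hq hq1)).add_const 1).smul
      (one_div_nonneg.2 (sub_nonneg.2 hq1)) |>.congr fun x _ => ?_
    simp only [tsallisMap, Pi.add_apply, Pi.neg_apply, smul_eq_mul]
    ring
  · have hc : 0 ≤ -(1 / (1 - q)) := neg_nonneg.2 (one_div_nonpos.2 (sub_nonpos.2 hq1))
    refine ((convexOn_rpow hq1).smul hc).add_const (1 / (1 - q)) |>.congr fun x _ => ?_
    simp only [tsallisMap, Pi.add_apply, smul_eq_mul]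
    ring

end TsallisMap

theorem tsallis_coherenceI_le_coherenceIV_general (d m : ℕ) (q : ℝ)
    (hq : (0 < q ∧ q < 1) ∨ (1 < q ∧ q ≤ 2))
    (lam : Fin m → ℝ) (hl : ∀ k, 0 ≤ lam k) (hls : ∑ k, lam k = 1)
    (p : Fin m → Fin d → ℝ) (hp : ∀ k j, 0 ≤ p k j) :
    (1 / (1 - q)) * (1 - (∑ j, (∑ k, (lam k) ^ q * p k j) ^ (1 / q)) ^ q)
      ≤ ∑ k, lam k * ((1 / (1 - q)) * (1 - (∑ j, (p k j) ^ (1 / q)) ^ q)) := by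
  have hq0 : 0 < q := by rcases hq with ⟨h, _⟩ | ⟨h, _⟩ <;> linarith
  set S := ∑ j, (∑ k, lam k ^ q * p k j) ^ (1 / q)
  set T : Fin m → ℝ := fun k => ∑ j, p k j ^ (1 / q)
  have hT : ∀ k, 0 ≤ T k := fun k => sum_nonneg fun j _ => rpow_nonneg (hp k j) _
  have hS : 0 ≤ S := sum_nonneg fun j _ =>
    rpow_nonneg (sum_nonneg fun k _ => mul_nonneg (rpow_nonneg (hl k) q) (hp k j)) _
  have hW : 0 ≤ ∑ k, lam k * T k := sum_nonneg fun k _ => mul_nonneg (hl k) (hT k)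
  calc tsallisMap q S ≤ tsallisMap q (∑ k, lam k * T k) := by
        rcases hq with ⟨-, hq1⟩ | ⟨hq1, -⟩
        · exact antitoneOn_tsallisMap hq0.le hq1.le hW hS
            (sum_mul_sum_rpow_le_sum_rpow_sum hq0 hq1.le hl hp)
        · exact monotoneOn_tsallisMap hq1.le hS hW
            (sum_rpow_sum_le_sum_mul_sum_rpow hq1.le hl hp)
    _ ≤ ∑ k, lam k * tsallisMap q (T k) :=
        (convexOn_tsallisMap hq0.le).map_sum_le (fun k _ => hl k) hls fun k _ => hT k

/-- C_q^I on a mixture is at most the convex combination of C_q^I on the components: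
C_q^I(ρ) ≤ C_q^IV(ρ), for q ∈ (0,1) ∪ (1,2]. -/
theorem tsallis_coherenceI_le_coherenceIV (d m : ℕ) (q : ℝ)
    (hq : (0 < q ∧ q < 1) ∨ (1 < q ∧ q ≤ 2))
    (lam : Fin m → ℝ) (hl : ∀ k, 0 ≤ lam k) (hls : ∑ k, lam k = 1)
    (p : Fin m → Fin d → ℝ) (hp : ∀ k j, 0 ≤ p k j) (hps : ∀ k, ∑ j, p k j = 1) :
    (1 / (1 - q)) * (1 - (∑ j, (∑ k, (lam k) ^ q * p k j) ^ (1 / q)) ^ q)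
      ≤ ∑ k, lam k * ((1 / (1 - q)) * (1 - (∑ j, (p k j) ^ (1 / q)) ^ q)) :=
  tsallis_coherenceI_le_coherenceIV_general d m q hq lam hl hls p hp
end

section
/- For q ∈ (0,1) and a density matrix ρ on a finite-dimensional Hilbert space, and any orthonormal basis {|j⟩}: ∑_j ⟨j|ρ^q|j⟩^{1/q} ≤ 1, with equality if and only if ρ is diagonal in the basis {|j⟩}. Consequently C_q^II(ρ) = (1/(1-q))(1 − ∑_j ⟨j|ρ^q|j⟩^{1/q}) ≥ 0 with equality iff ρ is incoherent. -/
open Finset in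
private lemma entry_formula {n : ℕ} (U : Matrix (Fin n) (Fin n) ℂ) (d : Fin n → ℂ)
    (i j : Fin n) :
    (U * Matrix.diagonal d * star U) i j = ∑ k, U i k * d k * (starRingEnd ℂ) (U j k) := by
  rw [Matrix.mul_apply]
  simp_rw [Matrix.mul_diagonal, Matrix.star_apply]
  rfl

/-- For a density matrix ρ (given by its spectral decomposition) and q ∈ (0,1):
∑_j ⟨j|ρ^q|j⟩^{1/q} ≤ 1 with equality iff ρ is diagonal in the basis {|j⟩};
consequently C_q^II(ρ) = (1/(1-q))(1 − ∑_j ⟨j|ρ^q|j⟩^{1/q}) ≥ 0 with equality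
iff ρ is incoherent. -/
theorem tsallis_coherenceII_nonneg_iff_incoherent (n : ℕ) (q : ℝ) (hq0 : 0 < q) (hq1 : q < 1)
    (U : Matrix (Fin n) (Fin n) ℂ) (hU : U ∈ Matrix.unitaryGroup (Fin n) ℂ)
    (μ : Fin n → ℝ) (hμ : ∀ k, 0 ≤ μ k) (hμs : ∑ k, μ k = 1)
    (ρ ρq : Matrix (Fin n) (Fin n) ℂ)
    (hρ : ρ = U * Matrix.diagonal (fun k => (μ k : ℂ)) * star U)
    (hρq : ρq = U * Matrix.diagonal (fun k => ((μ k ^ q : ℝ) : ℂ)) * star U) :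
    (∑ j, ((ρq j j).re) ^ (1 / q) ≤ 1) ∧
    ((∑ j, ((ρq j j).re) ^ (1 / q)) = 1 ↔ ∀ i j, i ≠ j → ρ i j = 0) ∧
    (0 ≤ (1 / (1 - q)) * (1 - ∑ j, ((ρq j j).re) ^ (1 / q))) ∧
    ((1 / (1 - q)) * (1 - ∑ j, ((ρq j j).re) ^ (1 / q)) = 0 ↔ ∀ i j, i ≠ j → ρ i j = 0) := by
  have hUU : U * star U = 1 := hU.2
  have hUU' : star U * U = 1 := hU.1
  -- the doubly stochastic matrix of squared moduli
  set a : Fin n → Fin n → ℝ := fun j k => Complex.normSq (U j k) with ha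
  have ha0 : ∀ j k, 0 ≤ a j k := fun j k => Complex.normSq_nonneg _
  -- row sums of `a` are 1
  have hrow : ∀ j, ∑ k, a j k = 1 := by
    intro j
    have h1 : (U * star U) j j = 1 := by rw [hUU]; simp
    rw [Matrix.mul_apply] at h1
    simp_rw [Matrix.star_apply] at h1
    have : ∑ k, ((a j k : ℝ) : ℂ) = 1 := by
      rw [← h1]
      exact Finset.sum_congr rfl fun k _ => (Complex.mul_conj (U j k)).symm
    exact_mod_cast this
  -- column sums of `a` are 1
  have hcol : ∀ k, ∑ j, a j k = 1 := by
    intro k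
    have h1 : (star U * U) k k = 1 := by rw [hUU']; simp
    rw [Matrix.mul_apply] at h1
    simp_rw [Matrix.star_apply] at h1
    have : ∑ j, ((a j k : ℝ) : ℂ) = 1 := by
      rw [← h1]
      exact Finset.sum_congr rfl fun j _ => Complex.normSq_eq_conj_mul_self
    exact_mod_cast this
  set R : Fin n → ℝ := fun j => ∑ k, a j k * μ k with hR
  set Rq : Fin n → ℝ := fun j => ∑ k, a j k * μ k ^ q with hRq
  have hRnn : ∀ j, 0 ≤ R j := fun j =>
    Finset.sum_nonneg fun k _ => mul_nonneg (ha0 j k) (hμ k)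
  have hRqnn : ∀ j, 0 ≤ Rq j := fun j =>
    Finset.sum_nonneg fun k _ => mul_nonneg (ha0 j k) (Real.rpow_nonneg (hμ k) q)
  -- diagonal entries
  have hdiag : ∀ j, ρ j j = ((R j : ℝ) : ℂ) := by
    intro j
    rw [hρ, entry_formula, hR]
    push_cast
    refine Finset.sum_congr rfl fun k _ => ?_
    simp only [ha]
    rw [mul_right_comm, Complex.mul_conj]
    try push_cast
    try ring
  have hdiagq : ∀ j, (ρq j j).re = Rq j := by
    intro j
    have : ρq j j = ((Rq j : ℝ) : ℂ) := by
      rw [hρq, entry_formula, hRq]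
      push_cast
      refine Finset.sum_congr rfl fun k _ => ?_
      simp only [ha]
      rw [mul_right_comm, Complex.mul_conj]
      try push_cast
      try ring
    rw [this, Complex.ofReal_re]
  -- trace
  have htr : ∑ j, R j = 1 := by
    rw [hR]
    rw [Finset.sum_comm]
    simp_rw [← Finset.sum_mul]
    simp_rw [fun k => hcol k]
    simpa using hμs
  -- Jensen: Rq j ≤ R j ^ q
  have hq1' : (1 : ℝ) ≤ 1 / q := by
    rw [le_div_iff₀ hq0]; linarith
  have hjensen : ∀ j, Rq j ≤ R j ^ q := by
    intro j
    have h := Real.arith_mean_le_rpow_mean Finset.univ (a j) (fun k => μ k ^ q)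
      (fun k _ => ha0 j k) (hrow j) (fun k _ => Real.rpow_nonneg (hμ k) q) hq1'
    have hzz : ∀ k, (μ k ^ q) ^ (1/q) = μ k := by
      intro k
      rw [← Real.rpow_mul (hμ k), mul_one_div_cancel hq0.ne', Real.rpow_one]
    simp only [hzz, one_div_one_div] at h
    exact h
  -- pointwise: Rq j ^ (1/q) ≤ R j
  have hpt : ∀ j, Rq j ^ (1/q) ≤ R j := by
    intro j
    calc Rq j ^ (1/q) ≤ (R j ^ q) ^ (1/q) :=
          Real.rpow_le_rpow (hRqnn j) (hjensen j) (by positivity)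
      _ = R j := by
          rw [← Real.rpow_mul (hRnn j), mul_one_div_cancel hq0.ne', Real.rpow_one]
  have hsum_le : ∑ j, ((ρq j j).re) ^ (1 / q) ≤ 1 := by
    simp_rw [hdiagq]
    calc ∑ j, Rq j ^ (1/q) ≤ ∑ j, R j := Finset.sum_le_sum fun j _ => hpt j
      _ = 1 := htr
  -- forward direction of equality case
  have hfwd : (∑ j, ((ρq j j).re) ^ (1 / q)) = 1 → ∀ i j, i ≠ j → ρ i j = 0 := by
    intro heq i j hij
    -- all pointwise inequalities are equalities
    have hall : ∀ j, Rq j ^ (1/q) = R j := by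
      have heq' : ∑ j, Rq j ^ (1/q) = ∑ j, R j := by
        rw [htr,
          show (∑ j, Rq j ^ (1/q)) = ∑ j, ((ρq j j).re) ^ (1/q) from
            Finset.sum_congr rfl fun j _ => by rw [hdiagq]]
        exact heq
      intro j'
      exact (Finset.sum_eq_sum_iff_of_le (fun i _ => hpt i)).mp heq' j' (Finset.mem_univ _)
    -- hence Rq j = R j ^ q for this j
    have hRRq : R j ^ q = Rq j := by
      have := hall j
      have h2 : (Rq j ^ (1/q)) ^ q = R j ^ q := by rw [this]
      rw [← Real.rpow_mul (hRqnn j), one_div_mul_cancel hq0.ne', Real.rpow_one] at h2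
      exact h2.symm
    -- equality case of Jensen: μ is constant on the support of row j
    have hconst : ∀ k, a j k ≠ 0 → μ k = R j := by
      have hstrict := Real.strictConcaveOn_rpow hq0 hq1
      have := (hstrict.map_sum_eq_iff' (t := Finset.univ) (w := a j) (p := μ)
        (fun k _ => ha0 j k) (hrow j) (fun k _ => hμ k)).mp ?_
      · intro k hk
        have := this k (Finset.mem_univ k) hk
        simpa [smul_eq_mul] using this
      · simp only [smul_eq_mul]
        exact hRRq
    -- off-diagonal entry of ρ vanishes
    rw [hρ, entry_formula]
    have hterm : ∀ k, U i k * ((μ k : ℝ) : ℂ) * (starRingEnd ℂ) (U j k)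
        = ((R j : ℝ) : ℂ) * (U i k * (starRingEnd ℂ) (U j k)) := by
      intro k
      by_cases hUjk : U j k = 0
      · simp [hUjk]
      · have : μ k = R j := hconst k (fun h => hUjk (Complex.normSq_eq_zero.mp h))
        rw [this]; ring
    rw [Finset.sum_congr rfl fun k _ => hterm k, ← Finset.mul_sum]
    have : ∑ k, U i k * (starRingEnd ℂ) (U j k) = 0 := by
      have h1 : (U * star U) i j = 0 := by rw [hUU]; simp [Matrix.one_apply, hij]
      rw [Matrix.mul_apply] at h1
      simp_rw [Matrix.star_apply] at h1
      exact h1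
    rw [this, mul_zero]
  -- backward direction
  have hbwd : (∀ i j, i ≠ j → ρ i j = 0) → (∑ j, ((ρq j j).re) ^ (1 / q)) = 1 := by
    intro hdiagonal
    -- ρ * U = U * diagonal μ
    have hcomm : ρ * U = U * Matrix.diagonal (fun k => (μ k : ℂ)) := by
      rw [hρ, Matrix.mul_assoc, Matrix.mul_assoc, hUU', Matrix.mul_one]
    have hkey : ∀ j k, U j k ≠ 0 → ((μ k : ℝ) : ℂ) = ρ j j := by
      intro j k hUjk
      have h1 : (ρ * U) j k = ρ j j * U j k := by
        rw [Matrix.mul_apply]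
        rw [Finset.sum_eq_single j]
        · intro l _ hl
          rw [hdiagonal j l (Ne.symm hl), zero_mul]
        · intro h; exact absurd (Finset.mem_univ j) h
      have h2 : (U * Matrix.diagonal (fun k => (μ k : ℂ))) j k = U j k * (μ k : ℂ) :=
        Matrix.mul_diagonal _ _ _ _
      have h3 : ρ j j * U j k = U j k * (μ k : ℂ) := by rw [← h1, hcomm, h2]
      rw [mul_comm (U j k)] at h3
      exact (mul_right_cancel₀ hUjk h3).symm
    -- hence Rq j = R j ^ q exactly
    have hex : ∀ j, Rq j = R j ^ q := by
      intro j
      have hμc : ∀ k, a j k ≠ 0 → μ k = R j := by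
        intro k hk
        have hUjk : U j k ≠ 0 := fun h => hk (by simp [ha, h])
        have := hkey j k hUjk
        rw [hdiag j] at this
        exact_mod_cast this
      have e1 : Rq j = ∑ k, a j k * R j ^ q := by
        refine Finset.sum_congr rfl fun k _ => ?_
        by_cases hk : a j k = 0
        · rw [hk, zero_mul, zero_mul]
        · rw [hμc k hk]
      rw [e1, ← Finset.sum_mul, hrow j, one_mul]
    have : ∀ j, Rq j ^ (1/q) = R j := by
      intro j
      rw [hex j, ← Real.rpow_mul (hRnn j), mul_one_div_cancel hq0.ne', Real.rpow_one]
    calc ∑ j, ((ρq j j).re) ^ (1/q) = ∑ j, R j := by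
          refine Finset.sum_congr rfl fun j _ => ?_
          rw [hdiagq j, this j]
      _ = 1 := htr
  have hiff : (∑ j, ((ρq j j).re) ^ (1 / q)) = 1 ↔ ∀ i j, i ≠ j → ρ i j = 0 :=
    ⟨hfwd, hbwd⟩
  have hc : 0 < 1 / (1 - q) := by
    apply div_pos one_pos; linarith
  refine ⟨hsum_le, hiff, ?_, ?_⟩
  · apply mul_nonneg hc.le; linarith
  · rw [mul_eq_zero]
    constructor
    · rintro (h | h)
      · exact absurd h hc.ne'
      · exact hiff.mp (by linarith)
    · intro h
      right
      rw [hiff.mpr h]; ring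
end

section
/- Let q ∈ (0,1), let |ψ⟩ = ∑_n α_n |ξ_n⟩_A ⊗ |ξ_n⟩_B be a Schmidt decomposition, and let {|i⟩_A}, {|j⟩_B} be arbitrary orthonormal product bases. Then ∑_{ij} |⟨ij|ψ⟩|^{2/q} ≤ ∑_n α_n^{2/q}; for q ∈ (1,2] the inequality is reversed. Consequently the Tsallis discord of a pure state equals D_q(|ψ⟩⟨ψ|) = (1/(1-q))(1 − (∑_n α_n^{2/q})^q), achieved in the Schmidt basis. -/
open Finset Matrix

private lemma two_rpow_add_le {p a b : ℝ} (ha : 0 ≤ a) (hb : 0 ≤ b) (hp : 1 ≤ p) :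
    a ^ p + b ^ p ≤ (a + b) ^ p := by
  have h := NNReal.add_rpow_le_rpow_add a.toNNReal b.toNNReal hp
  have h2 := NNReal.coe_le_coe.mpr h
  rwa [NNReal.coe_add, NNReal.coe_rpow, NNReal.coe_rpow, ← Real.toNNReal_add ha hb,
    Real.coe_toNNReal a ha, Real.coe_toNNReal b hb, NNReal.coe_rpow,
    Real.coe_toNNReal _ (by linarith)] at h2

private lemma two_rpow_add_ge {p a b : ℝ} (ha : 0 ≤ a) (hb : 0 ≤ b) (hp0 : 0 ≤ p) (hp1 : p ≤ 1) :
    (a + b) ^ p ≤ a ^ p + b ^ p := by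
  have h := NNReal.rpow_add_le_add_rpow a.toNNReal b.toNNReal hp0 hp1
  have h2 := NNReal.coe_le_coe.mpr h
  rwa [NNReal.coe_add, NNReal.coe_rpow, NNReal.coe_rpow, ← Real.toNNReal_add ha hb,
    NNReal.coe_rpow, Real.coe_toNNReal a ha, Real.coe_toNNReal b hb,
    Real.coe_toNNReal _ (by linarith)] at h2

private lemma sum_rpow_le_rpow_sum' {ι : Type*} (s : Finset ι) (f : ι → ℝ) {p : ℝ}
    (hp : 1 ≤ p) (hf : ∀ i ∈ s, 0 ≤ f i) :
    ∑ i ∈ s, f i ^ p ≤ (∑ i ∈ s, f i) ^ p := by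
  classical
  induction s using Finset.induction with
  | empty => simp [Real.zero_rpow (by positivity : p ≠ 0)]
  | @insert a s ha ih =>
    rw [sum_insert ha, sum_insert ha]
    have hfa := hf a (mem_insert_self a s)
    have hfs : ∀ i ∈ s, 0 ≤ f i := fun i hi => hf i (mem_insert_of_mem hi)
    calc f a ^ p + ∑ i ∈ s, f i ^ p ≤ f a ^ p + (∑ i ∈ s, f i) ^ p := by
          gcongr; exact ih hfs
      _ ≤ (f a + ∑ i ∈ s, f i) ^ p := two_rpow_add_le hfa (sum_nonneg hfs) hp

private lemma rpow_sum_le_sum_rpow' {ι : Type*} (s : Finset ι) (f : ι → ℝ) {p : ℝ}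
    (hp0 : 0 < p) (hp1 : p ≤ 1) (hf : ∀ i ∈ s, 0 ≤ f i) :
    (∑ i ∈ s, f i) ^ p ≤ ∑ i ∈ s, f i ^ p := by
  classical
  induction s using Finset.induction with
  | empty => simp [Real.zero_rpow (by positivity : p ≠ 0)]
  | @insert a s ha ih =>
    rw [sum_insert ha, sum_insert ha]
    have hfa := hf a (mem_insert_self a s)
    have hfs : ∀ i ∈ s, 0 ≤ f i := fun i hi => hf i (mem_insert_of_mem hi)
    calc (f a + ∑ i ∈ s, f i) ^ p ≤ f a ^ p + (∑ i ∈ s, f i) ^ p :=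
          two_rpow_add_ge hfa (sum_nonneg hfs) hp0.le hp1
      _ ≤ f a ^ p + ∑ i ∈ s, f i ^ p := by gcongr; exact ih hfs

private lemma arith_mean_rpow_le' {ι : Type*} (s : Finset ι) (w z : ι → ℝ)
    (hw : ∀ i ∈ s, 0 ≤ w i) (hw' : ∑ i ∈ s, w i = 1) (hz : ∀ i ∈ s, 0 ≤ z i)
    {p : ℝ} (hp0 : 0 ≤ p) (hp1 : p ≤ 1) :
    ∑ i ∈ s, w i * z i ^ p ≤ (∑ i ∈ s, w i * z i) ^ p := by
  have := (Real.concaveOn_rpow hp0 hp1).le_map_sum hw hw'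
    (fun i hi => Set.mem_Ici.mpr (hz i hi))
  simpa [smul_eq_mul] using this

private lemma overlap_unitary {d : ℕ} (e ξ : Fin d → Fin d → ℂ)
    (he : ∀ i j, (∑ a, (starRingEnd ℂ) (e i a) * e j a) = if i = j then 1 else 0)
    (hξ : ∀ i j, (∑ a, (starRingEnd ℂ) (ξ i a) * ξ j a) = if i = j then 1 else 0) :
    (∀ i i', (∑ n, (∑ a, (starRingEnd ℂ) (e i a) * ξ n a) *
        (starRingEnd ℂ) (∑ a, (starRingEnd ℂ) (e i' a) * ξ n a)) = if i = i' then 1 else 0) ∧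
    (∀ n m, (∑ i, (starRingEnd ℂ) (∑ a, (starRingEnd ℂ) (e i a) * ξ n a) *
        (∑ a, (starRingEnd ℂ) (e i a) * ξ m a)) = if n = m then 1 else 0) := by
  set M : Matrix (Fin d) (Fin d) ℂ := Matrix.of e with hMdef
  set N : Matrix (Fin d) (Fin d) ℂ := Matrix.of ξ with hNdef
  have unit : ∀ (P : Matrix (Fin d) (Fin d) ℂ),
      (∀ i j, (∑ a, (starRingEnd ℂ) (P i a) * P j a) = if i = j then 1 else 0) →
      P * Pᴴ = 1 := by
    intro P hP
    ext i j
    have h := congrArg (starRingEnd ℂ) (hP i j)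
    simp only [map_sum, _root_.map_mul, Complex.conj_conj, _root_.map_one, _root_.map_zero,
      apply_ite (starRingEnd ℂ)] at h
    simpa [Matrix.mul_apply, Matrix.conjTranspose_apply, Matrix.one_apply] using h
  have hM : M * Mᴴ = 1 := unit M he
  have hN : N * Nᴴ = 1 := unit N hξ
  have hM' : Mᴴ * M = 1 := mul_eq_one_comm.mp hM
  have hN' : Nᴴ * N = 1 := mul_eq_one_comm.mp hN
  set O : Matrix (Fin d) (Fin d) ℂ :=
    Matrix.of (fun i n => ∑ a, (starRingEnd ℂ) (e i a) * ξ n a) with hOdef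
  have hO : O = (Mᵀ)ᴴ * Nᵀ := by
    ext i n
    simp [hOdef, Matrix.mul_apply, Matrix.conjTranspose_apply, Matrix.transpose_apply,
      hMdef, hNdef]
  have hNt : Nᵀ * (Nᵀ)ᴴ = 1 := by
    have h : (Nᵀ)ᴴ = (Nᴴ)ᵀ := rfl
    rw [h, ← Matrix.transpose_mul, hN', Matrix.transpose_one]
  have hMt : (Mᵀ)ᴴ * Mᵀ = 1 := by
    have h : (Mᵀ)ᴴ = (Mᴴ)ᵀ := rfl
    rw [h, ← Matrix.transpose_mul, hM, Matrix.transpose_one]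
  have h1 : O * Oᴴ = 1 := by
    rw [hO, Matrix.conjTranspose_mul, Matrix.conjTranspose_conjTranspose,
      Matrix.mul_assoc, ← Matrix.mul_assoc (Nᵀ), hNt, Matrix.one_mul, hMt]
  have h2 : Oᴴ * O = 1 := mul_eq_one_comm.mp h1
  constructor
  · intro i i'
    have := congrFun (congrFun h1 i) i'
    simpa [Matrix.mul_apply, Matrix.conjTranspose_apply, Matrix.one_apply, hOdef] using this
  · intro n m
    have := congrFun (congrFun h2 n) m
    simpa [Matrix.mul_apply, Matrix.conjTranspose_apply, Matrix.one_apply, hOdef] using this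

private lemma marg' {d : ℕ} (α : Fin d → ℝ) (A B : Fin d → Fin d → ℂ)
    (hBcol : ∀ n m, (∑ j, (starRingEnd ℂ) (B j n) * B j m) = if n = m then 1 else 0)
    (i : Fin d) :
    ∑ j, ‖∑ n, (α n : ℂ) * A i n * B j n‖ ^ 2 =
    ∑ n, ‖A i n‖ ^ 2 * α n ^ 2 := by
  apply Complex.ofReal_injective
  push_cast
  calc ∑ j, ((‖∑ n, (α n : ℂ) * A i n * B j n‖:ℂ)) ^ 2
      = ∑ j, (∑ n, (α n : ℂ) * A i n * B j n) *
          (starRingEnd ℂ) (∑ n, (α n : ℂ) * A i n * B j n) :=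
        Finset.sum_congr rfl fun j _ => (Complex.mul_conj' _).symm
    _ = ∑ n, ∑ m, ((α n : ℂ) * (α m : ℂ) * A i n * (starRingEnd ℂ) (A i m)) *
          (∑ j, B j n * (starRingEnd ℂ) (B j m)) := by
        simp_rw [map_sum, _root_.map_mul, Finset.sum_mul, Finset.mul_sum, Complex.conj_ofReal]
        rw [Finset.sum_comm]
        refine Finset.sum_congr rfl fun n _ => ?_
        rw [Finset.sum_comm]
        exact Finset.sum_congr rfl fun m _ => Finset.sum_congr rfl fun j _ => by ring
    _ = ∑ n, ((‖A i n‖:ℂ)) ^ 2 * (α n : ℂ) ^ 2 := by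
        refine Finset.sum_congr rfl fun n _ => ?_
        have hB' : ∀ n m : Fin d, (∑ j, B j n * (starRingEnd ℂ) (B j m)) =
            if m = n then 1 else 0 := fun n m => by
          simpa [mul_comm] using hBcol m n
        rw [Finset.sum_eq_single n]
        · rw [hB' n n, if_pos rfl, mul_one, ← Complex.mul_conj' (A i n)]; ring
        · intro m _ hm
          rw [hB' n m, if_neg (fun h => hm h), mul_zero]
        · intro h; exact absurd (mem_univ n) h

/-- For a pure state with Schmidt coefficients α_n and q ∈ (0,1) ∪ (1,2]:
for any orthonormal product basis, ∑_{ij}|⟨ij|ψ⟩|^{2/q} ≤ ∑_n α_n^{2/q} when q < 1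
(reversed for q > 1); consequently the Tsallis discord of the pure state equals
(1/(1-q))(1 − (∑_n α_n^{2/q})^q), the minimum over product bases being achieved
in the Schmidt basis. -/
theorem tsallis_discord_pure_state (d : ℕ) (q : ℝ)
    (hq : (0 < q ∧ q < 1) ∨ (1 < q ∧ q ≤ 2))
    (α : Fin d → ℝ) (hα : ∀ n, 0 ≤ α n) (hαs : ∑ n, (α n) ^ 2 = 1)
    (ξA ξB : Fin d → Fin d → ℂ)
    (hA : ∀ i j, (∑ a, (starRingEnd ℂ) (ξA i a) * ξA j a) = if i = j then 1 else 0)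
    (hB : ∀ i j, (∑ a, (starRingEnd ℂ) (ξB i a) * ξB j a) = if i = j then 1 else 0)
    (ψ : Fin d × Fin d → ℂ)
    (hψ : ∀ a b, ψ (a, b) = ∑ n, (α n : ℂ) * ξA n a * ξB n b) :
    (q < 1 → ∀ eA eB : Fin d → Fin d → ℂ,
      (∀ i j, (∑ a, (starRingEnd ℂ) (eA i a) * eA j a) = if i = j then 1 else 0) →
      (∀ i j, (∑ a, (starRingEnd ℂ) (eB i a) * eB j a) = if i = j then 1 else 0) →
      ∑ i, ∑ j, ‖∑ a, ∑ b, (starRingEnd ℂ) (eA i a * eB j b) * ψ (a, b)‖ ^ (2 / q)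
        ≤ ∑ n, (α n) ^ (2 / q)) ∧
    (1 < q → ∀ eA eB : Fin d → Fin d → ℂ,
      (∀ i j, (∑ a, (starRingEnd ℂ) (eA i a) * eA j a) = if i = j then 1 else 0) →
      (∀ i j, (∑ a, (starRingEnd ℂ) (eB i a) * eB j a) = if i = j then 1 else 0) →
      ∑ n, (α n) ^ (2 / q)
        ≤ ∑ i, ∑ j, ‖∑ a, ∑ b, (starRingEnd ℂ) (eA i a * eB j b) * ψ (a, b)‖ ^ (2 / q)) ∧
    IsLeast { x : ℝ | ∃ eA eB : Fin d → Fin d → ℂ,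
        (∀ i j, (∑ a, (starRingEnd ℂ) (eA i a) * eA j a) = if i = j then 1 else 0) ∧
        (∀ i j, (∑ a, (starRingEnd ℂ) (eB i a) * eB j a) = if i = j then 1 else 0) ∧
        x = (1 / (1 - q)) * (1 - (∑ i, ∑ j,
            ‖∑ a, ∑ b, (starRingEnd ℂ) (eA i a * eB j b) * ψ (a, b)‖ ^ (2 / q)) ^ q) }
      ((1 / (1 - q)) * (1 - (∑ n, (α n) ^ (2 / q)) ^ q)) := by
  have hq0 : 0 < q := by rcases hq with ⟨h1, _⟩ | ⟨h1, _⟩ <;> linarith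
  have hpow : ∀ x : ℝ, 0 ≤ x → x ^ (2 / q) = (x ^ 2) ^ (1 / q) := by
    intro x hx
    rw [show (2 / q : ℝ) = ((2 : ℕ) : ℝ) * (1 / q) by push_cast; ring,
      Real.rpow_natCast_mul hx]
  have expand : ∀ (eA eB : Fin d → Fin d → ℂ) (i j : Fin d),
      (∑ a, ∑ b, (starRingEnd ℂ) (eA i a * eB j b) * ψ (a, b)) =
      ∑ n, (α n : ℂ) * (∑ a, (starRingEnd ℂ) (eA i a) * ξA n a) *
        (∑ b, (starRingEnd ℂ) (eB j b) * ξB n b) := by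
    intro eA eB i j
    simp_rw [hψ, _root_.map_mul, Finset.mul_sum, Finset.sum_mul]
    conv_lhs => enter [2, a]; rw [Finset.sum_comm]
    rw [Finset.sum_comm]
    refine Finset.sum_congr rfl fun n _ => ?_
    conv_rhs => rw [Finset.sum_comm]
    exact Finset.sum_congr rfl fun a _ => Finset.sum_congr rfl fun b _ => by ring
  -- the two inequality bounds
  have bound : ∀ (eA eB : Fin d → Fin d → ℂ),
      (∀ i j, (∑ a, (starRingEnd ℂ) (eA i a) * eA j a) = if i = j then 1 else 0) →
      (∀ i j, (∑ a, (starRingEnd ℂ) (eB i a) * eB j a) = if i = j then 1 else 0) →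
      (q < 1 →
        ∑ i, ∑ j, ‖∑ a, ∑ b, (starRingEnd ℂ) (eA i a * eB j b) * ψ (a, b)‖ ^ (2 / q)
          ≤ ∑ n, (α n) ^ (2 / q)) ∧
      (1 < q →
        ∑ n, (α n) ^ (2 / q)
          ≤ ∑ i, ∑ j, ‖∑ a, ∑ b, (starRingEnd ℂ) (eA i a * eB j b) * ψ (a, b)‖ ^ (2 / q)) := by
    intro eA eB heA heB
    have hUA := overlap_unitary eA ξA heA hA
    have hUB := overlap_unitary eB ξB heB hB
    set A : Fin d → Fin d → ℂ := fun i n => ∑ a, (starRingEnd ℂ) (eA i a) * ξA n a with hAdef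
    set B : Fin d → Fin d → ℂ := fun j n => ∑ b, (starRingEnd ℂ) (eB j b) * ξB n b with hBdef
    have hrow : ∀ i, ∑ n, ‖A i n‖ ^ 2 = 1 := by
      intro i
      have h := hUA.1 i i
      rw [if_pos rfl] at h
      apply Complex.ofReal_injective
      push_cast
      simp_rw [← Complex.mul_conj']
      exact h
    have hcol : ∀ n, ∑ i, ‖A i n‖ ^ 2 = 1 := by
      intro n
      have h := hUA.2 n n
      rw [if_pos rfl] at h
      apply Complex.ofReal_injective
      push_cast
      simp_rw [← Complex.mul_conj']
      exact (Finset.sum_congr rfl (fun i _ => mul_comm _ _)).trans h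
    have hmarg : ∀ i, (∑ j, ‖∑ a, ∑ b, (starRingEnd ℂ) (eA i a * eB j b) * ψ (a, b)‖ ^ 2)
        = ∑ n, ‖A i n‖ ^ 2 * α n ^ 2 := by
      intro i
      simp_rw [expand eA eB]
      exact marg' α A B hUB.2 i
    have hnn : ∀ i j, (0:ℝ) ≤ ‖∑ a, ∑ b, (starRingEnd ℂ) (eA i a * eB j b) * ψ (a, b)‖ ^ 2 :=
      fun i j => by positivity
    have hrw : (∑ i, ∑ j, ‖∑ a, ∑ b, (starRingEnd ℂ) (eA i a * eB j b) * ψ (a, b)‖ ^ (2 / q))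
        = ∑ i, ∑ j, (‖∑ a, ∑ b, (starRingEnd ℂ) (eA i a * eB j b) * ψ (a, b)‖ ^ 2) ^ (1 / q) :=
      Finset.sum_congr rfl fun i _ => Finset.sum_congr rfl fun j _ =>
        hpow _ (norm_nonneg _)
    have hrwα : (∑ n, (α n) ^ (2 / q)) = ∑ n, ((α n) ^ 2) ^ (1 / q) :=
      Finset.sum_congr rfl fun n _ => hpow _ (hα n)
    constructor
    · -- q < 1 : 1/q ≥ 1
      intro hq1
      have hr : (1:ℝ) ≤ 1 / q := by
        rw [le_div_iff₀ hq0]; linarith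
      rw [hrw, hrwα]
      calc ∑ i, ∑ j, (‖∑ a, ∑ b, (starRingEnd ℂ) (eA i a * eB j b) * ψ (a, b)‖ ^ 2) ^ (1 / q)
          ≤ ∑ i, (∑ j, ‖∑ a, ∑ b, (starRingEnd ℂ) (eA i a * eB j b) * ψ (a, b)‖ ^ 2) ^ (1 / q) :=
            Finset.sum_le_sum fun i _ =>
              sum_rpow_le_rpow_sum' univ _ hr (fun j _ => hnn i j)
        _ = ∑ i, (∑ n, ‖A i n‖ ^ 2 * α n ^ 2) ^ (1 / q) := by
            exact Finset.sum_congr rfl fun i _ => by rw [hmarg i]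
        _ ≤ ∑ i, ∑ n, ‖A i n‖ ^ 2 * (α n ^ 2) ^ (1 / q) :=
            Finset.sum_le_sum fun i _ =>
              Real.rpow_arith_mean_le_arith_mean_rpow univ (fun n => ‖A i n‖ ^ 2)
                (fun n => α n ^ 2) (fun n _ => by positivity) (hrow i)
                (fun n _ => by positivity) hr
        _ = ∑ n, (∑ i, ‖A i n‖ ^ 2) * (α n ^ 2) ^ (1 / q) := by
            rw [Finset.sum_comm]
            exact Finset.sum_congr rfl fun n _ => by rw [Finset.sum_mul]
        _ = ∑ n, (α n ^ 2) ^ (1 / q) := by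
            exact Finset.sum_congr rfl fun n _ => by rw [hcol n, one_mul]
    · -- 1 < q : 0 < 1/q ≤ 1
      intro hq1
      have hr0 : (0:ℝ) < 1 / q := by positivity
      have hr1 : 1 / q ≤ 1 := by
        rw [div_le_one hq0]; linarith
      rw [hrw, hrwα]
      calc ∑ n, ((α n) ^ 2) ^ (1 / q)
          = ∑ n, (∑ i, ‖A i n‖ ^ 2) * (α n ^ 2) ^ (1 / q) := by
            exact Finset.sum_congr rfl fun n _ => by rw [hcol n, one_mul]
        _ = ∑ i, ∑ n, ‖A i n‖ ^ 2 * (α n ^ 2) ^ (1 / q) := by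
            rw [Finset.sum_comm]
            exact Finset.sum_congr rfl fun n _ => by rw [Finset.sum_mul]
        _ ≤ ∑ i, (∑ n, ‖A i n‖ ^ 2 * α n ^ 2) ^ (1 / q) :=
            Finset.sum_le_sum fun i _ =>
              arith_mean_rpow_le' univ (fun n => ‖A i n‖ ^ 2) (fun n => α n ^ 2)
                (fun n _ => by positivity) (hrow i) (fun n _ => by positivity) hr0.le hr1
        _ = ∑ i, (∑ j, ‖∑ a, ∑ b, (starRingEnd ℂ) (eA i a * eB j b) * ψ (a, b)‖ ^ 2) ^ (1 / q) := by
            exact Finset.sum_congr rfl fun i _ => by rw [hmarg i]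
        _ ≤ ∑ i, ∑ j, (‖∑ a, ∑ b, (starRingEnd ℂ) (eA i a * eB j b) * ψ (a, b)‖ ^ 2) ^ (1 / q) :=
            Finset.sum_le_sum fun i _ =>
              rpow_sum_le_sum_rpow' univ _ hr0 hr1 (fun j _ => hnn i j)
  refine ⟨fun _ eA eB heA heB => (bound eA eB heA heB).1 ‹_›,
    fun _ eA eB heA heB => (bound eA eB heA heB).2 ‹_›, ?_, ?_⟩
  · -- membership : Schmidt basis achieves the value
    refine ⟨ξA, ξB, hA, hB, ?_⟩
    have hc : ∀ i j : Fin d, (∑ a, ∑ b, (starRingEnd ℂ) (ξA i a * ξB j b) * ψ (a, b))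
        = if i = j then (α i : ℂ) else 0 := by
      intro i j
      rw [expand ξA ξB i j]
      simp_rw [hA, hB]
      by_cases h : i = j
      · subst h
        rw [Finset.sum_eq_single i]
        · simp
        · intro m _ hm
          simp [Ne.symm hm]
        · intro h; exact absurd (mem_univ i) h
      · rw [if_neg h]
        apply Finset.sum_eq_zero
        intro n _
        by_cases h1 : i = n
        · subst h1
          rw [if_neg (fun hh : j = i => h hh.symm)]
          simp
        · rw [if_neg h1]
          simp
    have hS : (∑ i, ∑ j, ‖∑ a, ∑ b, (starRingEnd ℂ) (ξA i a * ξB j b) * ψ (a, b)‖ ^ (2 / q))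
        = ∑ n, (α n) ^ (2 / q) := by
      refine Finset.sum_congr rfl fun i _ => ?_
      rw [Finset.sum_eq_single i]
      · rw [hc i i, if_pos rfl]
        rw [Complex.norm_real, Real.norm_eq_abs, abs_of_nonneg (hα i)]
      · intro j _ hj
        rw [hc i j, if_neg (fun h => hj h.symm), norm_zero,
          Real.zero_rpow (by positivity : (2/q : ℝ) ≠ 0)]
      · intro h; exact absurd (mem_univ i) h
    rw [hS]
  · -- lower bound
    rintro x ⟨eA, eB, heA, heB, rfl⟩
    rcases hq with ⟨_, hq1⟩ | ⟨hq1, _⟩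
    · have hSle := (bound eA eB heA heB).1 hq1
      have hpos : (0:ℝ) < 1 / (1 - q) := by
        apply div_pos one_pos; linarith
      have hSnn : (0:ℝ) ≤ ∑ i, ∑ j,
          ‖∑ a, ∑ b, (starRingEnd ℂ) (eA i a * eB j b) * ψ (a, b)‖ ^ (2 / q) := by
        apply Finset.sum_nonneg; intro i _
        apply Finset.sum_nonneg; intro j _
        positivity
      have h2 := Real.rpow_le_rpow hSnn hSle hq0.le
      exact mul_le_mul_of_nonneg_left (by linarith) hpos.le
    · have hSle := (bound eA eB heA heB).2 hq1
      have hneg : 1 / (1 - q) < 0 := by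
        apply div_neg_of_pos_of_neg one_pos; linarith
      have hTnn : (0:ℝ) ≤ ∑ n, (α n) ^ (2 / q) := by
        apply Finset.sum_nonneg; intro n _
        exact Real.rpow_nonneg (hα n) _
      have h2 := Real.rpow_le_rpow hTnn hSle hq0.le
      exact mul_le_mul_of_nonpos_left (by linarith) hneg.le
end

section
/- Let q ∈ (0,1) ∪ (1,2] and let |ψ⟩ have Schmidt coefficients α_n ≥ 0, ∑_n α_n^2 = 1. Then the discord D_q^III(|ψ⟩⟨ψ|) = min over product bases of (1/(1-q))(∑_{ij}|⟨ij|ψ⟩|^{2q} − 1) equals (1/(1-q))(∑_n α_n^{2q} − 1) ≥ 0, with the minimum achieved in the Schmidt basis. -/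
open Finset Real Matrix

/-- Superadditivity of `x ^ q` for `q ≥ 1`. -/
lemma sum_rpow_le_rpow_sum {m : ℕ} (q : ℝ) (hq : 1 ≤ q) (x : Fin m → ℝ)
    (hx : ∀ j, 0 ≤ x j) : ∑ j, x j ^ q ≤ (∑ j, x j) ^ q := by
  have hS0 : 0 ≤ ∑ j, x j := Finset.sum_nonneg fun j _ => hx j
  rcases eq_or_lt_of_le hS0 with h0 | hpos
  · have hx0 : ∀ j, x j = 0 := fun j =>
      (Finset.sum_eq_zero_iff_of_nonneg (fun j _ => hx j)).mp h0.symm j (Finset.mem_univ j)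
    simp [hx0, Real.zero_rpow (show q ≠ 0 by linarith)]
  · have key : ∀ j, x j ^ q ≤ (∑ j, x j) ^ (q - 1) * x j := by
      intro j
      rcases eq_or_lt_of_le (hx j) with h0 | hpos'
      · rw [← h0, Real.zero_rpow (by linarith : q ≠ 0), mul_zero]
      · have hle : x j ≤ ∑ j, x j := Finset.single_le_sum (fun j _ => hx j) (Finset.mem_univ j)
        calc x j ^ q = x j ^ (q - 1) * x j := by
              rw [← Real.rpow_add_one hpos'.ne' (q - 1), sub_add_cancel]
          _ ≤ (∑ j, x j) ^ (q - 1) * x j :=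
              mul_le_mul_of_nonneg_right
                (Real.rpow_le_rpow (hx j) hle (by linarith)) (hx j)
    calc ∑ j, x j ^ q ≤ ∑ j, (∑ j, x j) ^ (q - 1) * x j :=
          Finset.sum_le_sum fun j _ => key j
      _ = (∑ j, x j) ^ (q - 1) * (∑ j, x j) := by rw [← Finset.mul_sum]
      _ = (∑ j, x j) ^ q := by
          rw [← Real.rpow_add_one hpos.ne' (q - 1), sub_add_cancel]

/-- Subadditivity of `x ^ q` for `0 < q ≤ 1`. -/
lemma rpow_sum_le_sum_rpow {m : ℕ} (q : ℝ) (hq0 : 0 < q) (hq1 : q ≤ 1) (x : Fin m → ℝ)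
    (hx : ∀ j, 0 ≤ x j) : (∑ j, x j) ^ q ≤ ∑ j, x j ^ q := by
  have hS0 : 0 ≤ ∑ j, x j := Finset.sum_nonneg fun j _ => hx j
  rcases eq_or_lt_of_le hS0 with h0 | hpos
  · rw [← h0, Real.zero_rpow hq0.ne']
    exact Finset.sum_nonneg fun j _ => Real.rpow_nonneg (hx j) q
  · have key : ∀ j, x j * (∑ j, x j) ^ (q - 1) ≤ x j ^ q := by
      intro j
      rcases eq_or_lt_of_le (hx j) with h0 | hpos'
      · rw [← h0, zero_mul]
        exact Real.rpow_nonneg le_rfl q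
      · have hle : x j ≤ ∑ j, x j := Finset.single_le_sum (fun j _ => hx j) (Finset.mem_univ j)
        calc x j * (∑ j, x j) ^ (q - 1) ≤ x j * x j ^ (q - 1) :=
              mul_le_mul_of_nonneg_left
                (Real.rpow_le_rpow_of_nonpos hpos' hle (by linarith)) (hx j)
          _ = x j ^ q := by
              rw [mul_comm, ← Real.rpow_add_one hpos'.ne' (q - 1), sub_add_cancel]
    calc (∑ j, x j) ^ q = (∑ j, x j) * (∑ j, x j) ^ (q - 1) := by
          rw [mul_comm, ← Real.rpow_add_one hpos.ne' (q - 1), sub_add_cancel]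
      _ = ∑ j, x j * (∑ j, x j) ^ (q - 1) := by rw [Finset.sum_mul]
      _ ≤ ∑ j, x j ^ q := Finset.sum_le_sum fun j _ => key j

/-- Rows orthonormal implies columns orthonormal for square complex matrices. -/
lemma ortho_cols {d : ℕ} (E : Fin d → Fin d → ℂ)
    (h : ∀ i j, (∑ a, (starRingEnd ℂ) (E i a) * E j a) = if i = j then 1 else 0) :
    ∀ a b, (∑ i, (starRingEnd ℂ) (E i a) * E i b) = if a = b then 1 else 0 := by
  have h1 : (Matrix.of E) * (Matrix.of E)ᴴ = 1 := by
    ext i j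
    have he : (Matrix.of E * (Matrix.of E)ᴴ) i j
        = (starRingEnd ℂ) (∑ a, (starRingEnd ℂ) (E i a) * E j a) := by
      simp only [Matrix.mul_apply, Matrix.conjTranspose_apply, _root_.map_sum, _root_.map_mul,
        Complex.conj_conj, Matrix.of_apply, Matrix.star_apply, Complex.star_def]
    rw [he, h i j]
    simp [Matrix.one_apply, apply_ite]
  have h2 : (Matrix.of E)ᴴ * (Matrix.of E) = 1 := mul_eq_one_comm.mp h1
  intro a b
  have hd := congrFun (congrFun h2 a) b
  simp only [Matrix.mul_apply, Matrix.conjTranspose_apply, Matrix.one_apply,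
    Matrix.of_apply, Matrix.star_apply, Complex.star_def] at hd
  rw [← hd]

/-- Expansion of the product-basis inner product in Schmidt form. -/
lemma inner_expand {d : ℕ} (α : Fin d → ℝ) (ξA ξB eA eB : Fin d → Fin d → ℂ)
    (ψ : Fin d × Fin d → ℂ)
    (hψ : ∀ a b, ψ (a, b) = ∑ n, (α n : ℂ) * ξA n a * ξB n b) (i j : Fin d) :
    (∑ a, ∑ b, (starRingEnd ℂ) (eA i a * eB j b) * ψ (a, b))
      = ∑ n, (α n : ℂ) * (∑ a, (starRingEnd ℂ) (eA i a) * ξA n a)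
          * (∑ b, (starRingEnd ℂ) (eB j b) * ξB n b) := by
  have L : (∑ a, ∑ b, (starRingEnd ℂ) (eA i a * eB j b) * ψ (a, b))
      = ∑ n, ∑ a, ∑ b, (α n : ℂ) * ((starRingEnd ℂ) (eA i a) * ξA n a)
          * ((starRingEnd ℂ) (eB j b) * ξB n b) := by
    have : ∀ a b, (starRingEnd ℂ) (eA i a * eB j b) * ψ (a, b)
        = ∑ n, (α n : ℂ) * ((starRingEnd ℂ) (eA i a) * ξA n a)
            * ((starRingEnd ℂ) (eB j b) * ξB n b) := by
      intro a b
      rw [hψ, Finset.mul_sum]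
      exact Finset.sum_congr rfl fun n _ => by rw [_root_.map_mul]; ring
    simp only [this]
    rw [show (∑ a, ∑ b, ∑ n, (α n : ℂ) * ((starRingEnd ℂ) (eA i a) * ξA n a)
            * ((starRingEnd ℂ) (eB j b) * ξB n b))
        = ∑ a, ∑ n, ∑ b, (α n : ℂ) * ((starRingEnd ℂ) (eA i a) * ξA n a)
            * ((starRingEnd ℂ) (eB j b) * ξB n b) from
      Finset.sum_congr rfl fun a _ => Finset.sum_comm]
    exact Finset.sum_comm
  rw [L]
  refine Finset.sum_congr rfl fun n _ => ?_
  rw [mul_assoc, Finset.sum_mul_sum, Finset.mul_sum]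
  refine Finset.sum_congr rfl fun a _ => ?_
  rw [Finset.mul_sum]
  exact Finset.sum_congr rfl fun b _ => by ring

/-- The transition matrix between two orthonormal bases has orthonormal columns. -/
lemma trans_ortho {d : ℕ} (ξ e : Fin d → Fin d → ℂ)
    (hξ : ∀ i j, (∑ b, (starRingEnd ℂ) (ξ i b) * ξ j b) = if i = j then 1 else 0)
    (he : ∀ i j, (∑ b, (starRingEnd ℂ) (e i b) * e j b) = if i = j then 1 else 0)
    (n m : Fin d) :
    (∑ j, (∑ b, (starRingEnd ℂ) (e j b) * ξ n b)
        * (starRingEnd ℂ) (∑ b, (starRingEnd ℂ) (e j b) * ξ m b))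
      = if n = m then 1 else 0 := by
  have step : ∀ j, (∑ b, (starRingEnd ℂ) (e j b) * ξ n b)
      * (starRingEnd ℂ) (∑ b, (starRingEnd ℂ) (e j b) * ξ m b)
      = ∑ b, ∑ b', (ξ n b * (starRingEnd ℂ) (ξ m b')) * ((starRingEnd ℂ) (e j b) * e j b') := by
    intro j
    rw [_root_.map_sum, Finset.sum_mul_sum]
    refine Finset.sum_congr rfl fun b _ => Finset.sum_congr rfl fun b' _ => ?_
    rw [_root_.map_mul, Complex.conj_conj]
    ring
  calc (∑ j, (∑ b, (starRingEnd ℂ) (e j b) * ξ n b)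
        * (starRingEnd ℂ) (∑ b, (starRingEnd ℂ) (e j b) * ξ m b))
      = ∑ j, ∑ b, ∑ b', (ξ n b * (starRingEnd ℂ) (ξ m b'))
          * ((starRingEnd ℂ) (e j b) * e j b') := Finset.sum_congr rfl fun j _ => step j
    _ = ∑ b, ∑ b', ∑ j, (ξ n b * (starRingEnd ℂ) (ξ m b'))
          * ((starRingEnd ℂ) (e j b) * e j b') := by
        rw [Finset.sum_comm]
        exact Finset.sum_congr rfl fun b _ => Finset.sum_comm
    _ = ∑ b, ∑ b', (ξ n b * (starRingEnd ℂ) (ξ m b'))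
          * ∑ j, (starRingEnd ℂ) (e j b) * e j b' := by
        exact Finset.sum_congr rfl fun b _ => Finset.sum_congr rfl fun b' _ =>
          (Finset.mul_sum _ _ _).symm
    _ = ∑ b, ξ n b * (starRingEnd ℂ) (ξ m b) := by
        simp [ortho_cols e he, mul_ite, Finset.sum_ite_eq]
    _ = if n = m then 1 else 0 := by
        have hmn := congrArg (starRingEnd ℂ) (hξ n m)
        rw [show (starRingEnd ℂ) (if n = m then (1:ℂ) else 0) = if n = m then 1 else 0 by
          split_ifs <;> simp] at hmn
        simp only [_root_.map_sum, _root_.map_mul, Complex.conj_conj] at hmn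
        exact hmn

/-- Norm-squared sum over a basis. -/
lemma trans_row {d : ℕ} (ξ : Fin d → Fin d → ℂ)
    (hξ : ∀ i j, (∑ b, (starRingEnd ℂ) (ξ i b) * ξ j b) = if i = j then 1 else 0)
    (x : Fin d → ℂ) :
    (∑ n, (∑ b, (starRingEnd ℂ) (x b) * ξ n b)
        * (starRingEnd ℂ) (∑ b, (starRingEnd ℂ) (x b) * ξ n b))
      = ∑ b, (starRingEnd ℂ) (x b) * x b := by
  have step : ∀ n, (∑ b, (starRingEnd ℂ) (x b) * ξ n b)
      * (starRingEnd ℂ) (∑ b, (starRingEnd ℂ) (x b) * ξ n b)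
      = ∑ b, ∑ b', ((starRingEnd ℂ) (x b) * x b') * (ξ n b * (starRingEnd ℂ) (ξ n b')) := by
    intro n
    rw [_root_.map_sum, Finset.sum_mul_sum]
    refine Finset.sum_congr rfl fun b _ => Finset.sum_congr rfl fun b' _ => ?_
    rw [_root_.map_mul, Complex.conj_conj]
    ring
  have hcols : ∀ b b', (∑ n, ξ n b * (starRingEnd ℂ) (ξ n b')) = if b = b' then 1 else 0 := by
    intro b b'
    have hcc := congrArg (starRingEnd ℂ) (ortho_cols ξ hξ b b')
    rw [show (starRingEnd ℂ) (if b = b' then (1:ℂ) else 0) = if b = b' then 1 else 0 by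
      split_ifs <;> simp] at hcc
    simp only [_root_.map_sum, _root_.map_mul, Complex.conj_conj] at hcc
    rw [← hcc]
  calc (∑ n, (∑ b, (starRingEnd ℂ) (x b) * ξ n b)
        * (starRingEnd ℂ) (∑ b, (starRingEnd ℂ) (x b) * ξ n b))
      = ∑ n, ∑ b, ∑ b', ((starRingEnd ℂ) (x b) * x b')
          * (ξ n b * (starRingEnd ℂ) (ξ n b')) := Finset.sum_congr rfl fun n _ => step n
    _ = ∑ b, ∑ b', ∑ n, ((starRingEnd ℂ) (x b) * x b')
          * (ξ n b * (starRingEnd ℂ) (ξ n b')) := by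
        rw [Finset.sum_comm]
        exact Finset.sum_congr rfl fun b _ => Finset.sum_comm
    _ = ∑ b, ∑ b', ((starRingEnd ℂ) (x b) * x b')
          * ∑ n, ξ n b * (starRingEnd ℂ) (ξ n b') := by
        exact Finset.sum_congr rfl fun b _ => Finset.sum_congr rfl fun b' _ =>
          (Finset.mul_sum _ _ _).symm
    _ = ∑ b, (starRingEnd ℂ) (x b) * x b := by
        simp [hcols, mul_ite, Finset.sum_ite_eq]

lemma sum_mul_conj_eq {m : ℕ} (f : Fin m → ℂ) :
    (∑ n, f n * (starRingEnd ℂ) (f n)) = ((∑ n, ‖f n‖ ^ 2 : ℝ) : ℂ) := by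
  push_cast
  exact Finset.sum_congr rfl fun n _ => Complex.mul_conj' (f n)

lemma rpow_two_mul (q : ℝ) {x : ℝ} (hx : 0 ≤ x) : x ^ (2 * q) = (x ^ 2) ^ q := by
  rw [show (2:ℝ) * q = ((2:ℕ):ℝ) * q by norm_num, Real.rpow_mul hx, Real.rpow_natCast]

section Core
variable {d : ℕ} (α : Fin d → ℝ) (ξA ξB eA eB : Fin d → Fin d → ℂ) (ψ : Fin d × Fin d → ℂ)

/-- Row sums of squared overlaps: ∑_j ‖⟨ij|ψ⟩‖² = ∑_n α_n² ‖U i n‖². -/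
lemma row_sum_eq
    (hB : ∀ i j, (∑ a, (starRingEnd ℂ) (ξB i a) * ξB j a) = if i = j then 1 else 0)
    (h2 : ∀ i j, (∑ a, (starRingEnd ℂ) (eB i a) * eB j a) = if i = j then 1 else 0)
    (hψ : ∀ a b, ψ (a, b) = ∑ n, (α n : ℂ) * ξA n a * ξB n b) (i : Fin d) :
    (∑ j, ‖∑ a, ∑ b, (starRingEnd ℂ) (eA i a * eB j b) * ψ (a, b)‖ ^ 2)
      = ∑ n, (α n) ^ 2 * ‖∑ a, (starRingEnd ℂ) (eA i a) * ξA n a‖ ^ 2 := by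
  have hVorth := trans_ortho ξB eB hB h2
  have expand : ∀ j, (∑ a, ∑ b, (starRingEnd ℂ) (eA i a * eB j b) * ψ (a, b))
      * (starRingEnd ℂ) (∑ a, ∑ b, (starRingEnd ℂ) (eA i a * eB j b) * ψ (a, b))
      = ∑ n, ∑ m, (((α n : ℂ) * (α m : ℂ))
          * ((∑ a, (starRingEnd ℂ) (eA i a) * ξA n a)
            * (starRingEnd ℂ) (∑ a, (starRingEnd ℂ) (eA i a) * ξA m a)))
          * ((∑ b, (starRingEnd ℂ) (eB j b) * ξB n b)
            * (starRingEnd ℂ) (∑ b, (starRingEnd ℂ) (eB j b) * ξB m b)) := by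
    intro j
    rw [inner_expand α ξA ξB eA eB ψ hψ i j, _root_.map_sum, Finset.sum_mul_sum]
    refine Finset.sum_congr rfl fun n _ => Finset.sum_congr rfl fun m _ => ?_
    simp only [_root_.map_mul, Complex.conj_ofReal]
    ring
  have key : (∑ j, (∑ a, ∑ b, (starRingEnd ℂ) (eA i a * eB j b) * ψ (a, b))
      * (starRingEnd ℂ) (∑ a, ∑ b, (starRingEnd ℂ) (eA i a * eB j b) * ψ (a, b)))
      = ∑ n, ((α n : ℂ) * (α n : ℂ))
          * ((∑ a, (starRingEnd ℂ) (eA i a) * ξA n a)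
            * (starRingEnd ℂ) (∑ a, (starRingEnd ℂ) (eA i a) * ξA n a)) := by
    calc (∑ j, (∑ a, ∑ b, (starRingEnd ℂ) (eA i a * eB j b) * ψ (a, b))
        * (starRingEnd ℂ) (∑ a, ∑ b, (starRingEnd ℂ) (eA i a * eB j b) * ψ (a, b)))
        = ∑ j, ∑ n, ∑ m, (((α n : ℂ) * (α m : ℂ))
            * ((∑ a, (starRingEnd ℂ) (eA i a) * ξA n a)
              * (starRingEnd ℂ) (∑ a, (starRingEnd ℂ) (eA i a) * ξA m a)))
            * ((∑ b, (starRingEnd ℂ) (eB j b) * ξB n b)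
              * (starRingEnd ℂ) (∑ b, (starRingEnd ℂ) (eB j b) * ξB m b)) :=
          Finset.sum_congr rfl fun j _ => expand j
      _ = ∑ n, ∑ m, ∑ j, (((α n : ℂ) * (α m : ℂ))
            * ((∑ a, (starRingEnd ℂ) (eA i a) * ξA n a)
              * (starRingEnd ℂ) (∑ a, (starRingEnd ℂ) (eA i a) * ξA m a)))
            * ((∑ b, (starRingEnd ℂ) (eB j b) * ξB n b)
              * (starRingEnd ℂ) (∑ b, (starRingEnd ℂ) (eB j b) * ξB m b)) := by
          rw [Finset.sum_comm]
          exact Finset.sum_congr rfl fun n _ => Finset.sum_comm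
      _ = ∑ n, ∑ m, (((α n : ℂ) * (α m : ℂ))
            * ((∑ a, (starRingEnd ℂ) (eA i a) * ξA n a)
              * (starRingEnd ℂ) (∑ a, (starRingEnd ℂ) (eA i a) * ξA m a)))
            * ∑ j, ((∑ b, (starRingEnd ℂ) (eB j b) * ξB n b)
              * (starRingEnd ℂ) (∑ b, (starRingEnd ℂ) (eB j b) * ξB m b)) :=
          Finset.sum_congr rfl fun n _ => Finset.sum_congr rfl fun m _ =>
            (Finset.mul_sum _ _ _).symm
      _ = _ := by
          simp only [hVorth, mul_ite, mul_one, mul_zero]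
          exact Finset.sum_congr rfl fun n _ => by rw [Finset.sum_ite_eq]; simp
  have key2 : ((∑ j, ‖∑ a, ∑ b, (starRingEnd ℂ) (eA i a * eB j b) * ψ (a, b)‖ ^ 2 : ℝ) : ℂ)
      = ((∑ n, (α n) ^ 2 * ‖∑ a, (starRingEnd ℂ) (eA i a) * ξA n a‖ ^ 2 : ℝ) : ℂ) := by
    rw [← sum_mul_conj_eq, key]
    push_cast
    refine Finset.sum_congr rfl fun n _ => ?_
    rw [← Complex.mul_conj' (∑ a, (starRingEnd ℂ) (eA i a) * ξA n a)]
    ring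
  exact_mod_cast key2
end Core

lemma discord_ineq (d : ℕ) (q : ℝ)
    (hq : (0 < q ∧ q < 1) ∨ (1 < q ∧ q ≤ 2))
    (α : Fin d → ℝ) (hα : ∀ n, 0 ≤ α n)
    (ξA ξB : Fin d → Fin d → ℂ)
    (hA : ∀ i j, (∑ a, (starRingEnd ℂ) (ξA i a) * ξA j a) = if i = j then 1 else 0)
    (hB : ∀ i j, (∑ a, (starRingEnd ℂ) (ξB i a) * ξB j a) = if i = j then 1 else 0)
    (ψ : Fin d × Fin d → ℂ)
    (hψ : ∀ a b, ψ (a, b) = ∑ n, (α n : ℂ) * ξA n a * ξB n b)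
    (eA eB : Fin d → Fin d → ℂ)
    (h1 : ∀ i j, (∑ a, (starRingEnd ℂ) (eA i a) * eA j a) = if i = j then 1 else 0)
    (h2 : ∀ i j, (∑ a, (starRingEnd ℂ) (eB i a) * eB j a) = if i = j then 1 else 0) :
    (1 / (1 - q)) * ((∑ n, (α n) ^ (2 * q)) - 1)
      ≤ (1 / (1 - q)) * ((∑ i, ∑ j,
          ‖∑ a, ∑ b, (starRingEnd ℂ) (eA i a * eB j b) * ψ (a, b)‖ ^ (2 * q)) - 1) := by
  classical
  have hq0 : 0 < q := by rcases hq with ⟨h, _⟩ | ⟨h, _⟩ <;> linarith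
  -- weights and probabilities
  set w : Fin d → Fin d → ℝ := fun i n => ‖∑ a, (starRingEnd ℂ) (eA i a) * ξA n a‖ ^ 2 with hw
  set p : Fin d → Fin d → ℝ :=
    fun i j => ‖∑ a, ∑ b, (starRingEnd ℂ) (eA i a * eB j b) * ψ (a, b)‖ ^ 2 with hp
  have hw0 : ∀ i n, 0 ≤ w i n := fun i n => by simp only [hw]; positivity
  have hp0 : ∀ i j, 0 ≤ p i j := fun i j => by simp only [hp]; positivity
  have hrow : ∀ i, ∑ j, p i j = ∑ n, (α n) ^ 2 * w i n := fun i =>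
    row_sum_eq α ξA ξB eA eB ψ hB h2 hψ i
  have hwrow : ∀ i, ∑ n, w i n = 1 := by
    intro i
    have hcx := trans_row ξA hA (fun a => eA i a)
    rw [h1 i i, if_pos rfl] at hcx
    have hco := (sum_mul_conj_eq
      (fun n => ∑ a, (starRingEnd ℂ) (eA i a) * ξA n a)).symm.trans hcx
    exact_mod_cast hco
  have hwcol : ∀ n, ∑ i, w i n = 1 := by
    intro n
    have hcx := trans_ortho ξA eA hA h1 n n
    rw [if_pos rfl] at hcx
    have hco := (sum_mul_conj_eq
      (fun i => ∑ a, (starRingEnd ℂ) (eA i a) * ξA n a)).symm.trans hcx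
    exact_mod_cast hco
  -- rewrite the objective as sums of p ^ q
  have hobj : (∑ i, ∑ j, ‖∑ a, ∑ b, (starRingEnd ℂ) (eA i a * eB j b) * ψ (a, b)‖ ^ (2 * q))
      = ∑ i, ∑ j, p i j ^ q :=
    Finset.sum_congr rfl fun i _ => Finset.sum_congr rfl fun j _ =>
      rpow_two_mul q (norm_nonneg _)
  have hαobj : (∑ n, (α n) ^ (2 * q)) = ∑ n, ((α n) ^ 2) ^ q :=
    Finset.sum_congr rfl fun n _ => rpow_two_mul q (hα n)
  rw [hobj, hαobj]
  -- the middle quantity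
  have hmid : (∑ n, ((α n) ^ 2) ^ q) = ∑ i, ∑ n, w i n * ((α n) ^ 2) ^ q := by
    rw [Finset.sum_comm]
    refine Finset.sum_congr rfl fun n _ => ?_
    rw [← Finset.sum_mul, hwcol n, one_mul]
  have hmemIci : ∀ n : Fin d, (α n) ^ 2 ∈ Set.Ici (0:ℝ) := fun n => sq_nonneg (α n)
  have hrw : ∀ i, (∑ n, (α n) ^ 2 * w i n) = ∑ n, w i n • ((α n) ^ 2) :=
    fun i => Finset.sum_congr rfl fun n _ => by rw [smul_eq_mul, mul_comm]
  rcases hq with ⟨hq0', hq1⟩ | ⟨hq1, hq2⟩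
  · -- 0 < q < 1 : positive factor, need ∑ α^{2q} ≤ ∑∑ p^q
    have hfac : 0 ≤ 1 / (1 - q) := by
      have h1q : (0:ℝ) < 1 - q := by linarith
      positivity
    refine mul_le_mul_of_nonneg_left (sub_le_sub_right ?_ 1) hfac
    rw [hmid]
    refine Finset.sum_le_sum fun i _ => ?_
    calc ∑ n, w i n * ((α n) ^ 2) ^ q
        ≤ (∑ n, (α n) ^ 2 * w i n) ^ q := by
          rw [hrw i]
          have := (Real.concaveOn_rpow hq0.le hq1.le).le_map_sum
            (fun n _ => hw0 i n) (hwrow i) (fun n _ => hmemIci n)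
          simpa [smul_eq_mul] using this
      _ = (∑ j, p i j) ^ q := by rw [hrow i]
      _ ≤ ∑ j, p i j ^ q := rpow_sum_le_sum_rpow q hq0 hq1.le _ (fun j => hp0 i j)
  · -- 1 < q : negative factor, need ∑∑ p^q ≤ ∑ α^{2q}
    have hfac : 1 / (1 - q) ≤ 0 := by
      apply div_nonpos_of_nonneg_of_nonpos <;> linarith
    refine mul_le_mul_of_nonpos_left (sub_le_sub_right ?_ 1) hfac
    rw [hmid]
    refine Finset.sum_le_sum fun i _ => ?_
    calc ∑ j, p i j ^ q
        ≤ (∑ j, p i j) ^ q := sum_rpow_le_rpow_sum q hq1.le _ (fun j => hp0 i j)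
      _ = (∑ n, (α n) ^ 2 * w i n) ^ q := by rw [hrow i]
      _ ≤ ∑ n, w i n * ((α n) ^ 2) ^ q := by
          rw [hrw i]
          have := (convexOn_rpow hq1.le).map_sum_le
            (fun n _ => hw0 i n) (hwrow i) (fun n _ => hmemIci n)
          simpa [smul_eq_mul] using this

/-- For a pure state with Schmidt coefficients α_n and q ∈ (0,1) ∪ (1,2], the discord
D_q^III(|ψ⟩⟨ψ|) = min over product bases of (1/(1-q))(∑_{ij}|⟨ij|ψ⟩|^{2q} − 1)
equals (1/(1-q))(∑_n α_n^{2q} − 1) ≥ 0, achieved in the Schmidt basis. -/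
theorem tsallis_discordIII_pure_state (d : ℕ) (q : ℝ)
    (hq : (0 < q ∧ q < 1) ∨ (1 < q ∧ q ≤ 2))
    (α : Fin d → ℝ) (hα : ∀ n, 0 ≤ α n) (hαs : ∑ n, (α n) ^ 2 = 1)
    (ξA ξB : Fin d → Fin d → ℂ)
    (hA : ∀ i j, (∑ a, (starRingEnd ℂ) (ξA i a) * ξA j a) = if i = j then 1 else 0)
    (hB : ∀ i j, (∑ a, (starRingEnd ℂ) (ξB i a) * ξB j a) = if i = j then 1 else 0)
    (ψ : Fin d × Fin d → ℂ)
    (hψ : ∀ a b, ψ (a, b) = ∑ n, (α n : ℂ) * ξA n a * ξB n b) :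
    IsLeast { x : ℝ | ∃ eA eB : Fin d → Fin d → ℂ,
        (∀ i j, (∑ a, (starRingEnd ℂ) (eA i a) * eA j a) = if i = j then 1 else 0) ∧
        (∀ i j, (∑ a, (starRingEnd ℂ) (eB i a) * eB j a) = if i = j then 1 else 0) ∧
        x = (1 / (1 - q)) * ((∑ i, ∑ j,
            ‖∑ a, ∑ b, (starRingEnd ℂ) (eA i a * eB j b) * ψ (a, b)‖ ^ (2 * q)) - 1) }
      ((1 / (1 - q)) * ((∑ n, (α n) ^ (2 * q)) - 1)) ∧
    0 ≤ (1 / (1 - q)) * ((∑ n, (α n) ^ (2 * q)) - 1) := by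

  classical
  have hq0 : 0 < q := by rcases hq with ⟨h, _⟩ | ⟨h, _⟩ <;> linarith
  have h2q : (2 : ℝ) * q ≠ 0 := by positivity
  -- value in the Schmidt basis
  have hdiag : ∀ i j, (∑ a, ∑ b, (starRingEnd ℂ) (ξA i a * ξB j b) * ψ (a, b))
      = if i = j then (α i : ℂ) else 0 := by
    intro i j
    rw [inner_expand α ξA ξB ξA ξB ψ hψ i j]
    simp only [hA, hB]
    rw [Finset.sum_eq_single i (fun n _ hn => by simp [Ne.symm hn])
      (fun h => absurd (Finset.mem_univ i) h)]
    by_cases h : i = j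
    · subst h; simp
    · simp [h, Ne.symm h]
  have hmem_val : (∑ i, ∑ j,
      ‖∑ a, ∑ b, (starRingEnd ℂ) (ξA i a * ξB j b) * ψ (a, b)‖ ^ (2 * q))
      = ∑ n, (α n) ^ (2 * q) := by
    refine Finset.sum_congr rfl fun i _ => ?_
    rw [Finset.sum_eq_single i (fun j _ hj => by
        rw [hdiag i j, if_neg (Ne.symm hj), norm_zero, Real.zero_rpow h2q])
      (fun h => absurd (Finset.mem_univ i) h)]
    rw [hdiag i i, if_pos rfl, Complex.norm_real, Real.norm_eq_abs, abs_of_nonneg (hα i)]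
  -- each α n ^ 2 is at most 1
  have hub : ∀ n, (α n) ^ 2 ≤ 1 := by
    intro n
    rw [← hαs]
    exact Finset.single_le_sum (fun j _ => sq_nonneg (α j)) (Finset.mem_univ n)
  refine ⟨⟨⟨ξA, ξB, hA, hB, by rw [hmem_val]⟩, ?_⟩, ?_⟩
  · rintro x ⟨eA, eB, h1, h2, rfl⟩
    exact discord_ineq d q hq α hα ξA ξB hA hB ψ hψ eA eB h1 h2
  · -- nonnegativity
    have hαobj : (∑ n, (α n) ^ (2 * q)) = ∑ n, ((α n) ^ 2) ^ q :=
      Finset.sum_congr rfl fun n _ => rpow_two_mul q (hα n)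
    rcases hq with ⟨hq0', hq1⟩ | ⟨hq1, hq2⟩
    · have hfac : 0 ≤ 1 / (1 - q) := by
        have h1q : (0:ℝ) < 1 - q := by linarith
        positivity
      refine mul_nonneg hfac (sub_nonneg.mpr ?_)
      rw [hαobj, ← hαs]
      refine Finset.sum_le_sum fun n _ => ?_
      rcases eq_or_lt_of_le (sq_nonneg (α n)) with h0 | hpos
      · rw [← h0, Real.zero_rpow hq0.ne']
      · calc (α n) ^ 2 = ((α n) ^ 2) ^ (1:ℝ) := (Real.rpow_one _).symm
          _ ≤ ((α n) ^ 2) ^ q :=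
            Real.rpow_le_rpow_of_exponent_ge hpos (hub n) hq1.le
    · have hfac : 1 / (1 - q) ≤ 0 := by
        apply div_nonpos_of_nonneg_of_nonpos <;> linarith
      have hsle : (∑ n, (α n) ^ (2 * q)) - 1 ≤ 0 := by
        refine sub_nonpos.mpr ?_
        rw [hαobj, ← hαs]
        refine Finset.sum_le_sum fun n _ => ?_
        rcases eq_or_lt_of_le (sq_nonneg (α n)) with h0 | hpos
        · rw [← h0, Real.zero_rpow hq0.ne']
        · calc ((α n) ^ 2) ^ q ≤ ((α n) ^ 2) ^ (1:ℝ) :=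
              Real.rpow_le_rpow_of_exponent_ge hpos (hub n) hq1.le
            _ = (α n) ^ 2 := Real.rpow_one _
      nlinarith [mul_nonneg (neg_nonneg.mpr hfac) (neg_nonneg.mpr hsle)]
end

section
/- Let q ∈ (0,1) ∪ (1,2], let ρ = ∑_k λ_k |ψ_k⟩⟨ψ_k| with λ_k ≥ 0, ∑λ_k = 1, and let each |ψ_k⟩ have Schmidt coefficients α_{kn}. Then the Tsallis correlation measure satisfies Q_q(ρ) ≥ (1/(1-q))·(1 − (∑_{k,n} λ_k α_{kn}^{2/q})^q), with equality when ρ is pure. -/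
/-!
For an orthonormal basis `{|i⟩}` of `A`, the matrix `P_k n i = |⟨i|ξ_{kn}⟩|²` is the entrywise
squared modulus of the unitary matrix relating the bases `{ξ_{kn}}_n` and `{|i⟩}`, hence doubly
stochastic. The `i`-th summand of `N_Q` is `f ((α_k² P_k)_i)` with `f x = x ^ (1/q)`, and for a
doubly stochastic `P` Jensen's inequality applied column by column, followed by the row sums, gives
`∑ᵢ f ((x P)ᵢ) ≤ ∑ₙ f (xₙ)` when `f` is convex (`q < 1`), reversed when `f` is concave (`q > 1`).
Since `N ↦ (1 - N^q)/(1 - q)` is decreasing for `q < 1` and increasing for `q > 1`, both regimes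
give the bound. For pure `ρ` the Schmidt basis of `ψ_{k₀}` makes `P_{k₀}` the identity.
-/

open Finset Matrix

section Majorization

variable {𝕜 β n : Type*} [Fintype n] [DecidableEq n] [Field 𝕜] [LinearOrder 𝕜]
  [IsStrictOrderedRing 𝕜] [AddCommGroup β] [PartialOrder β] [IsOrderedAddMonoid β]
  [Module 𝕜 β] [IsStrictOrderedModule 𝕜 β] {s : Set 𝕜} {f : 𝕜 → β}

theorem ConvexOn.sum_map_vecMul_le {P : Matrix n n 𝕜} {x : n → 𝕜} (hf : ConvexOn 𝕜 s f)
    (hP : P ∈ doublyStochastic 𝕜 n) (hx : ∀ i, x i ∈ s) : ∑ j, f ((x ᵥ* P) j) ≤ ∑ i, f (x i) :=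
  calc ∑ j, f ((x ᵥ* P) j) = ∑ j, f (∑ i, P i j • x i) := by
        simp only [vecMul, dotProduct, smul_eq_mul, mul_comm]
    _ ≤ ∑ j, ∑ i, P i j • f (x i) :=
        sum_le_sum fun j _ => hf.map_sum_le (fun i _ => nonneg_of_mem_doublyStochastic hP)
          (sum_col_of_mem_doublyStochastic hP j) (fun i _ => hx i)
    _ = ∑ i, f (x i) := by
        rw [sum_comm]
        simp only [← sum_smul, sum_row_of_mem_doublyStochastic hP, one_smul]

theorem ConcaveOn.sum_le_sum_map_vecMul {P : Matrix n n 𝕜} {x : n → 𝕜} (hf : ConcaveOn 𝕜 s f)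
    (hP : P ∈ doublyStochastic 𝕜 n) (hx : ∀ i, x i ∈ s) : ∑ i, f (x i) ≤ ∑ j, f ((x ᵥ* P) j) :=
  ConvexOn.sum_map_vecMul_le (β := βᵒᵈ) hf hP hx

theorem ConvexOn.sum_smul_sum_map_vecMul_le {ι : Type*} [Fintype ι] {w : ι → 𝕜}
    {P : ι → Matrix n n 𝕜} {x : ι → n → 𝕜} (hf : ConvexOn 𝕜 s f) (hw : ∀ k, 0 ≤ w k)
    (hP : ∀ k, P k ∈ doublyStochastic 𝕜 n) (hx : ∀ k i, x k i ∈ s) :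
    ∑ k, w k • ∑ j, f ((x k ᵥ* P k) j) ≤ ∑ k, w k • ∑ i, f (x k i) :=
  sum_le_sum fun k _ => smul_le_smul_of_nonneg_left (hf.sum_map_vecMul_le (hP k) (hx k)) (hw k)

theorem ConcaveOn.sum_smul_sum_le_sum_smul_sum_map_vecMul {ι : Type*} [Fintype ι]
    {w : ι → 𝕜} {P : ι → Matrix n n 𝕜} {x : ι → n → 𝕜} (hf : ConcaveOn 𝕜 s f)
    (hw : ∀ k, 0 ≤ w k) (hP : ∀ k, P k ∈ doublyStochastic 𝕜 n) (hx : ∀ k i, x k i ∈ s) :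
    ∑ k, w k • ∑ i, f (x k i) ≤ ∑ k, w k • ∑ j, f ((x k ᵥ* P k) j) :=
  ConvexOn.sum_smul_sum_map_vecMul_le (β := βᵒᵈ) hf hw hP hx

end Majorization

theorem Matrix.of_mem_unitaryGroup_of_rows_orthonormal {n α : Type*} [Fintype n]
    [DecidableEq n] [CommRing α] [StarRing α] {M : n → n → α}
    (hM : ∀ i j, ∑ a, starRingEnd α (M i a) * M j a = if i = j then 1 else 0) :
    of M ∈ unitaryGroup n α := by
  rw [mem_unitaryGroup_iff]
  ext i j
  simpa [mul_apply, one_apply, mul_comm, eq_comm, starRingEnd_apply] using hM j i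

theorem Matrix.norm_sq_mem_doublyStochastic {n 𝕜 : Type*} [Fintype n] [DecidableEq n] [RCLike 𝕜]
    {U : Matrix n n 𝕜} (hU : U ∈ unitaryGroup n 𝕜) :
    of (fun i j => ‖U i j‖ ^ 2) ∈ doublyStochastic ℝ n := by
  refine mem_doublyStochastic_iff_sum.2
    ⟨fun i j => by simp only [of_apply]; positivity, fun i => ?_, fun j => ?_⟩
  · have := congrFun₂ (mem_unitaryGroup_iff.1 hU) i i
    simp only [mul_apply, star_apply, RCLike.star_def, RCLike.mul_conj, one_apply_eq] at this
    exact_mod_cast this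
  · have := congrFun₂ (mem_unitaryGroup_iff'.1 hU) j j
    simp only [mul_apply, star_apply, RCLike.star_def, RCLike.conj_mul, one_apply_eq] at this
    exact_mod_cast this

theorem Matrix.norm_sq_sum_conj_mul_mem_doublyStochastic {n 𝕜 : Type*} [Fintype n]
    [DecidableEq n] [RCLike 𝕜] {E F : n → n → 𝕜}
    (hE : ∀ i j, ∑ a, starRingEnd 𝕜 (E i a) * E j a = if i = j then 1 else 0)
    (hF : ∀ i j, ∑ a, starRingEnd 𝕜 (F i a) * F j a = if i = j then 1 else 0) :
    of (fun j i => ‖∑ a, starRingEnd 𝕜 (E i a) * F j a‖ ^ 2) ∈ doublyStochastic ℝ n := by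
  have hU := mul_mem (of_mem_unitaryGroup_of_rows_orthonormal hF)
    (Unitary.star_mem (of_mem_unitaryGroup_of_rows_orthonormal hE))
  convert norm_sq_mem_doublyStochastic hU using 5
  simp only [mul_apply, of_apply, star_apply, RCLike.star_def, mul_comm]

theorem antitoneOn_one_div_one_sub_mul_one_sub_rpow {q : ℝ} (hq₀ : 0 < q) (hq₁ : q < 1) :
    AntitoneOn (fun N : ℝ => 1 / (1 - q) * (1 - N ^ q)) (Set.Ici 0) := by
  intro N hN S _ hNS
  have : N ^ q ≤ S ^ q := Real.rpow_le_rpow hN hNS hq₀.le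
  have : 0 ≤ 1 / (1 - q) := by rw [one_div_nonneg]; linarith
  dsimp only
  gcongr

theorem monotoneOn_one_div_one_sub_mul_one_sub_rpow {q : ℝ} (hq : 1 < q) :
    MonotoneOn (fun N : ℝ => 1 / (1 - q) * (1 - N ^ q)) (Set.Ici 0) := by
  intro S hS N _ hSN
  have : S ^ q ≤ N ^ q := Real.rpow_le_rpow hS hSN (by linarith)
  have : 1 / (1 - q) ≤ 0 := by rw [one_div_nonpos]; linarith
  exact mul_le_mul_of_nonpos_left (by linarith) this

theorem tsallis_mixture_le_of_mem_doublyStochastic {ι n : Type*} [Fintype ι] [Fintype n]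
    [DecidableEq n] {q : ℝ} (hq : (0 < q ∧ q < 1) ∨ 1 < q) {lam : ι → ℝ} (hl : ∀ k, 0 ≤ lam k)
    {P : ι → Matrix n n ℝ} (hP : ∀ k, P k ∈ doublyStochastic ℝ n) {x : ι → n → ℝ}
    (hx : ∀ k i, x k i ∈ Set.Ici 0) :
    1 / (1 - q) * (1 - (∑ k, lam k * ∑ i, x k i ^ (1 / q)) ^ q) ≤
      1 / (1 - q) * (1 - (∑ k, lam k * ∑ j, (x k ᵥ* P k) j ^ (1 / q)) ^ q) := by
  have hq₀ : 0 < q := by rcases hq with ⟨h, -⟩ | h <;> linarith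
  have hweighted (y : ι → n → ℝ) (hy : ∀ k j, 0 ≤ y k j) :
      0 ≤ ∑ k, lam k * ∑ j, y k j ^ (1 / q) :=
    sum_nonneg fun k _ => mul_nonneg (hl k) (sum_nonneg fun j _ => Real.rpow_nonneg (hy k j) _)
  have hPx₀ := hweighted (fun k => x k ᵥ* P k) fun k =>
    nonneg_vecMul_of_mem_rowStochastic
      (mem_doublyStochastic_iff_mem_rowStochastic_and_mem_colStochastic.1 (hP k)).1 (hx k)
  have hx₀ := hweighted x hx
  rcases hq with ⟨-, hq₁⟩ | hq₁
  · have h1q : 1 ≤ 1 / q := by rw [le_div_iff₀ hq₀]; linarith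
    exact antitoneOn_one_div_one_sub_mul_one_sub_rpow hq₀ hq₁ hPx₀ hx₀
      ((convexOn_rpow h1q).sum_smul_sum_map_vecMul_le hl hP hx)
  · have h1q : 1 / q ≤ 1 := by rw [div_le_iff₀ hq₀]; linarith
    exact monotoneOn_one_div_one_sub_mul_one_sub_rpow hq₁ hx₀ hPx₀
      ((Real.concaveOn_rpow (by positivity) h1q).sum_smul_sum_le_sum_smul_sum_map_vecMul hl hP hx)

theorem tsallis_correlation_lower_bound_general (d m : ℕ) (q : ℝ)
    (hq : (0 < q ∧ q < 1) ∨ (1 < q ∧ q ≤ 2))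
    (lam : Fin m → ℝ) (hl : ∀ k, 0 ≤ lam k)
    (α : Fin m → Fin d → ℝ) (hα : ∀ k n, 0 ≤ α k n)
    (ξ : Fin m → Fin d → Fin d → ℂ)
    (hξ : ∀ k i j, (∑ a, (starRingEnd ℂ) (ξ k i a) * ξ k j a) = if i = j then 1 else 0) :
    (∀ eA : Fin d → Fin d → ℂ,
      (∀ i j, (∑ a, (starRingEnd ℂ) (eA i a) * eA j a) = if i = j then 1 else 0) →
      (1 / (1 - q)) * (1 - (∑ k, ∑ n, lam k * (α k n) ^ (2 / q)) ^ q) ≤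
        (1 / (1 - q)) * (1 - (∑ i, ∑ k, lam k *
          (∑ n, (α k n) ^ 2 * ‖∑ a, (starRingEnd ℂ) (eA i a) * ξ k n a‖ ^ 2) ^ (1 / q)) ^ q)) ∧
    (∀ k₀ : Fin m, (∀ k, lam k = if k = k₀ then 1 else 0) →
      ∃ eA : Fin d → Fin d → ℂ,
        (∀ i j, (∑ a, (starRingEnd ℂ) (eA i a) * eA j a) = if i = j then 1 else 0) ∧
        (1 / (1 - q)) * (1 - (∑ i, ∑ k, lam k *
          (∑ n, (α k n) ^ 2 * ‖∑ a, (starRingEnd ℂ) (eA i a) * ξ k n a‖ ^ 2) ^ (1 / q)) ^ q)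
          = (1 / (1 - q)) * (1 - (∑ k, ∑ n, lam k * (α k n) ^ (2 / q)) ^ q)) := by
  have hsq (k n) : α k n ^ (2 / q) = (α k n ^ 2) ^ (1 / q) := by
    rw [← Real.rpow_natCast_mul (hα k n), mul_one_div, Nat.cast_ofNat]
  refine ⟨fun eA heA => ?_, fun k₀ hk₀ => ⟨ξ k₀, hξ k₀, ?_⟩⟩
  · set P := fun k => of fun n i => ‖∑ a, starRingEnd ℂ (eA i a) * ξ k n a‖ ^ 2
    have hP k : P k ∈ doublyStochastic ℝ (Fin d) :=
      norm_sq_sum_conj_mul_mem_doublyStochastic heA (hξ k)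
    set x := fun k n => α k n ^ 2
    have hx k n : x k n ∈ Set.Ici 0 := Set.mem_Ici.2 (sq_nonneg _)
    have hN : ∑ i, ∑ k, lam k *
          (∑ n, α k n ^ 2 * ‖∑ a, starRingEnd ℂ (eA i a) * ξ k n a‖ ^ 2) ^ (1 / q) =
        ∑ k, lam k * ∑ i, (x k ᵥ* P k) i ^ (1 / q) := by
      rw [sum_comm]; simp only [mul_sum]; rfl
    have hS : ∑ k, ∑ n, lam k * α k n ^ (2 / q) = ∑ k, lam k * ∑ n, x k n ^ (1 / q) := by
      simp only [mul_sum, hsq, x]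
    rw [hN, hS]
    exact tsallis_mixture_le_of_mem_doublyStochastic (hq.imp id And.left) hl hP hx
  · simp [hk₀, hξ k₀, hsq, apply_ite (‖·‖), ite_pow]

/-- Lower bound for the Tsallis correlation measure: for ρ = ∑_k λ_k |ψ_k⟩⟨ψ_k| with
Schmidt coefficients α_{kn} (Schmidt vectors ξ_{kn} on system A), and any orthonormal
basis {|i⟩_A}, the quantity (1/(1-q))(1 − N_Q^q) with
N_Q = ∑_{i,k} λ_k (∑_n α_{kn}² |⟨i|ξ_{kn}⟩|²)^{1/q} is at least
(1/(1-q))(1 − (∑_{k,n} λ_k α_{kn}^{2/q})^q), with equality achieved for pure ρ. -/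
theorem tsallis_correlation_lower_bound (d m : ℕ) (q : ℝ)
    (hq : (0 < q ∧ q < 1) ∨ (1 < q ∧ q ≤ 2))
    (lam : Fin m → ℝ) (hl : ∀ k, 0 ≤ lam k) (hls : ∑ k, lam k = 1)
    (α : Fin m → Fin d → ℝ) (hα : ∀ k n, 0 ≤ α k n) (hαs : ∀ k, ∑ n, (α k n) ^ 2 = 1)
    (ξ : Fin m → Fin d → Fin d → ℂ)
    (hξ : ∀ k i j, (∑ a, (starRingEnd ℂ) (ξ k i a) * ξ k j a) = if i = j then 1 else 0) :
    (∀ eA : Fin d → Fin d → ℂ,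
      (∀ i j, (∑ a, (starRingEnd ℂ) (eA i a) * eA j a) = if i = j then 1 else 0) →
      (1 / (1 - q)) * (1 - (∑ k, ∑ n, lam k * (α k n) ^ (2 / q)) ^ q) ≤
        (1 / (1 - q)) * (1 - (∑ i, ∑ k, lam k *
          (∑ n, (α k n) ^ 2 * ‖∑ a, (starRingEnd ℂ) (eA i a) * ξ k n a‖ ^ 2) ^ (1 / q)) ^ q)) ∧
    (∀ k₀ : Fin m, (∀ k, lam k = if k = k₀ then 1 else 0) →
      ∃ eA : Fin d → Fin d → ℂ,
        (∀ i j, (∑ a, (starRingEnd ℂ) (eA i a) * eA j a) = if i = j then 1 else 0) ∧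
        (1 / (1 - q)) * (1 - (∑ i, ∑ k, lam k *
          (∑ n, (α k n) ^ 2 * ‖∑ a, (starRingEnd ℂ) (eA i a) * ξ k n a‖ ^ 2) ^ (1 / q)) ^ q)
          = (1 / (1 - q)) * (1 - (∑ k, ∑ n, lam k * (α k n) ^ (2 / q)) ^ q)) :=
  tsallis_correlation_lower_bound_general d m q hq lam hl α hα ξ hξ
end

section
/- Let q ∈ (0,1), let λ_k ≥ 0 with ∑_k λ_k = 1, let α_{kn} ≥ 0 with ∑_n α_{kn}^2 = 1 for each k, and let u_{i,kn} ≥ 0 satisfy ∑_i u_{i,kn} = 1 for each (k,n) and ∑_n u_{i,kn} ≤ 1 for each (i,k) [arising from |⟨i|ξ_{kn}⟩|^2 for orthonormal vectors]. Then ∑_{i,k} λ_k (∑_n α_{kn}^2 u_{i,kn})^{1/q} ≤ ∑_{k,n} λ_k α_{kn}^{2/q}. -/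
open Finset

lemma substoch_jensen {N : ℕ} (p : ℝ) (hp : 1 ≤ p) (w x : Fin N → ℝ)
    (hw : ∀ n, 0 ≤ w n) (hws : ∑ n, w n ≤ 1) (hx : ∀ n, 0 ≤ x n) :
    (∑ n, x n * w n) ^ p ≤ ∑ n, w n * (x n) ^ p := by
  set s := ∑ n, w n with hs
  have hs0 : 0 ≤ s := Finset.sum_nonneg fun n _ => hw n
  rcases eq_or_lt_of_le hs0 with h0 | h0
  · have hz : ∀ n, w n = 0 := by
      intro n
      have := (Finset.sum_eq_zero_iff_of_nonneg (fun n _ => hw n)).mp h0.symm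
      exact this n (Finset.mem_univ n)
    simp only [hz, mul_zero, zero_mul, Finset.sum_const_zero]
    rw [Real.zero_rpow (by linarith : p ≠ 0)]
  · have key := Real.rpow_arith_mean_le_arith_mean_rpow Finset.univ
      (fun n => w n / s) x (fun n _ => div_nonneg (hw n) hs0)
      (by rw [← Finset.sum_div, ← hs, div_self (ne_of_gt h0)])
      (fun n _ => hx n) hp
    have e1 : (∑ n, w n / s * x n) = (∑ n, x n * w n) / s := by
      rw [Finset.sum_div]; congr 1; ext n; ring
    rw [e1, Real.div_rpow (Finset.sum_nonneg fun n _ => mul_nonneg (hx n) (hw n)) hs0] at key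
    have hsp : 0 < s ^ p := Real.rpow_pos_of_pos h0 p
    have h2 : (∑ n, x n * w n) ^ p ≤ s ^ p * ∑ n, w n / s * x n ^ p := by
      rw [div_le_iff₀ hsp] at key; linarith [key]
    refine h2.trans ?_
    rw [Finset.mul_sum]
    apply Finset.sum_le_sum
    intro n _
    have : s ^ p * (w n / s * x n ^ p) = s ^ (p - 1) * (w n * x n ^ p) := by
      rw [Real.rpow_sub h0, Real.rpow_one]
      field_simp
    rw [this]
    have hsle : s ^ (p - 1) ≤ 1 := by
      rcases le_or_gt 1 s with h | h
      · have : s = 1 := le_antisymm hws h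
        rw [this, Real.one_rpow]
      · calc s ^ (p-1) ≤ s ^ (0:ℝ) :=
              Real.rpow_le_rpow_of_exponent_ge h0 h.le (by linarith)
          _ = 1 := Real.rpow_zero s
    calc s ^ (p - 1) * (w n * x n ^ p) ≤ 1 * (w n * x n ^ p) := by
          apply mul_le_mul_of_nonneg_right hsle
          exact mul_nonneg (hw n) (Real.rpow_nonneg (hx n) p)
      _ = w n * x n ^ p := one_mul _

/-- Core scalar inequality in the lower bound for the Tsallis correlation measure:
for q ∈ (0,1), weights λ_k, probability amplitudes α_{kn} with ∑_n α_{kn}² = 1, and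
doubly substochastic overlaps u_{i,kn}:
∑_{i,k} λ_k (∑_n α_{kn}² u_{i,kn})^{1/q} ≤ ∑_{k,n} λ_k α_{kn}^{2/q}. -/
theorem tsallis_correlation_core_ineq (I K N : ℕ) (q : ℝ) (hq0 : 0 < q) (hq1 : q < 1)
    (lam : Fin K → ℝ) (hl : ∀ k, 0 ≤ lam k) (hls : ∑ k, lam k = 1)
    (α : Fin K → Fin N → ℝ) (hα : ∀ k n, 0 ≤ α k n) (hαs : ∀ k, ∑ n, (α k n) ^ 2 = 1)
    (u : Fin I → Fin K → Fin N → ℝ) (hu : ∀ i k n, 0 ≤ u i k n)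
    (hu1 : ∀ k n, ∑ i, u i k n = 1) (hu2 : ∀ i k, ∑ n, u i k n ≤ 1) :
    ∑ i, ∑ k, lam k * (∑ n, (α k n) ^ 2 * u i k n) ^ (1 / q)
      ≤ ∑ k, ∑ n, lam k * (α k n) ^ (2 / q) := by
  have hp : (1:ℝ) ≤ 1 / q := by
    rw [le_div_iff₀ hq0]; linarith
  have key : ∀ i k, (∑ n, (α k n) ^ 2 * u i k n) ^ (1/q)
      ≤ ∑ n, u i k n * (α k n) ^ (2 / q) := by
    intro i k
    have := substoch_jensen (1/q) hp (u i k) (fun n => (α k n) ^ 2)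
      (hu i k) (hu2 i k) (fun n => sq_nonneg _)
    have e : ∀ n : Fin N, ((α k n) ^ 2 : ℝ) ^ ((1:ℝ)/q) = α k n ^ ((2:ℝ)/q) := fun n => by
      rw [← Real.rpow_natCast (α k n) 2, ← Real.rpow_mul (hα k n), Nat.cast_ofNat, mul_one_div]
    refine this.trans (le_of_eq ?_)
    simp only [e]
  calc ∑ i, ∑ k, lam k * (∑ n, (α k n) ^ 2 * u i k n) ^ (1 / q)
      ≤ ∑ i, ∑ k, lam k * ∑ n, u i k n * (α k n) ^ (2 / q) := by
        apply Finset.sum_le_sum; intro i _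
        apply Finset.sum_le_sum; intro k _
        exact mul_le_mul_of_nonneg_left (key i k) (hl k)
    _ = ∑ k, ∑ n, lam k * (α k n) ^ (2 / q) := by
        rw [Finset.sum_comm]
        refine Finset.sum_congr rfl fun k _ => ?_
        simp_rw [Finset.mul_sum]
        rw [Finset.sum_comm]
        refine Finset.sum_congr rfl fun n _ => ?_
        have h : ∑ i, lam k * (u i k n * α k n ^ (2/q))
            = (∑ i, u i k n) * (lam k * α k n ^ (2/q)) := by
          rw [Finset.sum_mul]; exact Finset.sum_congr rfl fun i _ => by ring
        rw [h, hu1, one_mul]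
end

section
/- Let q ∈ (0,1) ∪ (1,2] and ρ a density matrix on ℂ^d ⊗ ℂ^d. Then D_q^II(ρ) ≤ (1/(1-q))·(1 − d^{2(q-1)/q}·(Tr ρ^q)^{1/q}) ≤ (1/(1-q))·(1 − d^{2(q-1)/q}). -/
open Matrix Finset in
private lemma tsallis_key_aux (d : ℕ) (q : ℝ)
    (U : Matrix (Fin d × Fin d) (Fin d × Fin d) ℂ)
    (hU : U ∈ Matrix.unitaryGroup (Fin d × Fin d) ℂ)
    (μ : Fin d × Fin d → ℝ)
    (ρq : Matrix (Fin d × Fin d) (Fin d × Fin d) ℂ)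
    (hρq : ρq = U * Matrix.diagonal (fun k => ((μ k ^ q : ℝ) : ℂ)) * star U)
    (eA eB : Fin d → Fin d → ℂ)
    (hA : ∀ i j, (∑ a, (starRingEnd ℂ) (eA i a) * eA j a) = if i = j then 1 else 0)
    (hB : ∀ i j, (∑ a, (starRingEnd ℂ) (eB i a) * eB j a) = if i = j then 1 else 0) :
    ∃ w : (Fin d × Fin d) → (Fin d × Fin d) → ℝ,
      (∀ p k, 0 ≤ w p k) ∧ (∀ p, ∑ k, w p k = 1) ∧ (∀ k, ∑ p, w p k = 1) ∧
      ∀ p : Fin d × Fin d,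
        (∑ a : Fin d × Fin d, ∑ c : Fin d × Fin d,
          (starRingEnd ℂ) (eA p.1 a.1 * eB p.2 a.2) * ρq a c * (eA p.1 c.1 * eB p.2 c.2)).re
        = ∑ k, μ k ^ q * w p k := by
  classical
  set V : Matrix (Fin d × Fin d) (Fin d × Fin d) ℂ :=
    Matrix.of (fun p a => eA p.1 a.1 * eB p.2 a.2) with hVdef
  have hV : V * Vᴴ = 1 := by
    ext p p'
    simp only [Matrix.mul_apply, conjTranspose_apply, hVdef, Matrix.of_apply, Matrix.one_apply]
    rw [Fintype.sum_prod_type]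
    have : ∀ a b : Fin d, eA p.1 a * eB p.2 b * star (eA p'.1 a * eB p'.2 b)
        = ((starRingEnd ℂ) (eA p'.1 a) * eA p.1 a) * ((starRingEnd ℂ) (eB p'.2 b) * eB p.2 b) := by
      intro a b; simp [star_mul']; ring
    simp_rw [this, ← Finset.mul_sum, ← Finset.sum_mul, hA, hB]
    by_cases h1 : p'.1 = p.1 <;> by_cases h2 : p'.2 = p.2
    · have hpp : p = p' := Prod.ext h1.symm h2.symm
      simp [hpp]
    · have hpp : p ≠ p' := fun h => h2 (by rw [h])
      simp [h1, h2, hpp]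
    · have hpp : p ≠ p' := fun h => h1 (by rw [h])
      simp [h1, h2, hpp]
    · have hpp : p ≠ p' := fun h => h1 (by rw [h])
      simp [h1, h2, hpp]
  have hV' : Vᴴ * V = 1 := mul_eq_one_comm.mp hV
  have hUU : U * Uᴴ = 1 := by
    have := hU.2; rwa [Matrix.star_eq_conjTranspose] at this
  have hUU' : Uᴴ * U = 1 := by
    have := hU.1; rwa [Matrix.star_eq_conjTranspose] at this
  set Y : Matrix (Fin d × Fin d) (Fin d × Fin d) ℂ := (Vᴴ)ᵀ * U with hYdef
  have hYt : ((Vᴴ)ᵀ)ᴴ = Vᵀ := by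
    ext a p; simp [conjTranspose_apply, transpose_apply]
  have hYY : Y * Yᴴ = 1 := by
    rw [hYdef, Matrix.conjTranspose_mul, hYt, Matrix.mul_assoc, ← Matrix.mul_assoc U, hUU,
      Matrix.one_mul, ← Matrix.transpose_mul, hV, Matrix.transpose_one]
  have hYY' : Yᴴ * Y = 1 := mul_eq_one_comm.mp hYY
  refine ⟨fun p k => Complex.normSq (Y p k), fun p k => Complex.normSq_nonneg _, ?_, ?_, ?_⟩
  · intro p
    have h := congrFun (congrFun hYY p) p
    simp only [Matrix.mul_apply, conjTranspose_apply, Matrix.one_apply_eq] at h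
    have h2 : ∀ k, Y p k * star (Y p k) = ((Complex.normSq (Y p k) : ℝ) : ℂ) := fun k =>
      Complex.mul_conj _
    rw [Finset.sum_congr rfl (fun k _ => h2 k), ← Complex.ofReal_sum] at h
    exact_mod_cast h
  · intro k
    have h := congrFun (congrFun hYY' k) k
    simp only [Matrix.mul_apply, conjTranspose_apply, Matrix.one_apply_eq] at h
    have h2 : ∀ p, star (Y p k) * Y p k = ((Complex.normSq (Y p k) : ℝ) : ℂ) := fun p => by
      rw [mul_comm]; exact Complex.mul_conj _
    rw [Finset.sum_congr rfl (fun p _ => h2 p), ← Complex.ofReal_sum] at h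
    exact_mod_cast h
  · intro p
    have hmain : (∑ a : Fin d × Fin d, ∑ c : Fin d × Fin d,
          (starRingEnd ℂ) (eA p.1 a.1 * eB p.2 a.2) * ρq a c * (eA p.1 c.1 * eB p.2 c.2))
        = (Y * Matrix.diagonal (fun k => ((μ k ^ q : ℝ) : ℂ)) * Yᴴ) p p := by
      have hfac : Y * Matrix.diagonal (fun k => ((μ k ^ q : ℝ) : ℂ)) * Yᴴ
          = (Vᴴ)ᵀ * ρq * Vᵀ := by
        rw [hρq, hYdef, Matrix.conjTranspose_mul, hYt, Matrix.star_eq_conjTranspose]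
        noncomm_ring
      rw [hfac]
      simp only [Matrix.mul_apply, transpose_apply, conjTranspose_apply, hVdef, Matrix.of_apply,
        Finset.sum_mul, starRingEnd_apply]
      rw [Finset.sum_comm]
    rw [hmain]
    have hYD : ∀ k, (Y * Matrix.diagonal (fun k => ((μ k ^ q : ℝ) : ℂ))) p k
        = Y p k * ((μ k ^ q : ℝ) : ℂ) := fun k => Matrix.mul_diagonal _ _ _ _
    rw [Matrix.mul_apply]
    simp only [conjTranspose_apply, hYD]
    have h3 : ∀ k, Y p k * ((μ k ^ q : ℝ) : ℂ) * star (Y p k)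
        = ((μ k ^ q * Complex.normSq (Y p k) : ℝ) : ℂ) := by
      intro k
      have hmc := Complex.mul_conj (Y p k)
      rw [starRingEnd_apply] at hmc
      have : Y p k * ((μ k ^ q : ℝ) : ℂ) * star (Y p k)
          = ((μ k ^ q : ℝ) : ℂ) * (Y p k * star (Y p k)) := by ring
      rw [this, hmc]; push_cast; ring
    rw [Finset.sum_congr rfl (fun k _ => h3 k), ← Complex.ofReal_sum, Complex.ofReal_re]

/-- Upper bound on the second Tsallis discord: D_q^II(ρ), the infimum over orthonormal
product bases of (1/(1-q))(1 − ∑_{ij} ⟨ij|ρ^q|ij⟩^(1/q)), satisfies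
D_q^II(ρ) ≤ (1/(1-q))(1 − d^{2(q-1)/q}(Tr ρ^q)^{1/q}) ≤ (1/(1-q))(1 − d^{2(q-1)/q}). -/
theorem tsallis_discordII_upper_bound (d : ℕ) (hd : 0 < d) (q : ℝ)
    (hq : (0 < q ∧ q < 1) ∨ (1 < q ∧ q ≤ 2))
    (U : Matrix (Fin d × Fin d) (Fin d × Fin d) ℂ)
    (hU : U ∈ Matrix.unitaryGroup (Fin d × Fin d) ℂ)
    (μ : Fin d × Fin d → ℝ) (hμ : ∀ k, 0 ≤ μ k) (hμs : ∑ k, μ k = 1)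
    (ρ ρq : Matrix (Fin d × Fin d) (Fin d × Fin d) ℂ)
    (hρ : ρ = U * Matrix.diagonal (fun k => (μ k : ℂ)) * star U)
    (hρq : ρq = U * Matrix.diagonal (fun k => ((μ k ^ q : ℝ) : ℂ)) * star U) :
    sInf { x : ℝ | ∃ eA eB : Fin d → Fin d → ℂ,
        (∀ i j, (∑ a, (starRingEnd ℂ) (eA i a) * eA j a) = if i = j then 1 else 0) ∧
        (∀ i j, (∑ a, (starRingEnd ℂ) (eB i a) * eB j a) = if i = j then 1 else 0) ∧
        x = (1 / (1 - q)) * (1 - ∑ i, ∑ j,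
            ((∑ a : Fin d × Fin d, ∑ c : Fin d × Fin d,
              (starRingEnd ℂ) (eA i a.1 * eB j a.2) * ρq a c * (eA i c.1 * eB j c.2)).re)
              ^ (1 / q)) }
      ≤ (1 / (1 - q)) * (1 - (d : ℝ) ^ (2 * (q - 1) / q) * (∑ k, μ k ^ q) ^ (1 / q)) ∧
    (1 / (1 - q)) * (1 - (d : ℝ) ^ (2 * (q - 1) / q) * (∑ k, μ k ^ q) ^ (1 / q))
      ≤ (1 / (1 - q)) * (1 - (d : ℝ) ^ (2 * (q - 1) / q)) := by
  classical
  have hq0 : 0 < q := by rcases hq with ⟨h, _⟩ | ⟨h, _⟩ <;> linarith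
  have hq0' : q ≠ 0 := hq0.ne'
  have hr0 : (0:ℝ) ≤ 1 / q := by positivity
  have hD : (0:ℝ) < (d:ℝ) := by exact_mod_cast hd
  set c : ℝ := 1 / (1 - q) with hc
  set K : ℝ := (d : ℝ) ^ (2 * (q - 1) / q) with hK
  have hK0 : 0 ≤ K := Real.rpow_nonneg hD.le _
  set T : ℝ := ∑ k, μ k ^ q with hT
  have hT0 : 0 ≤ T := Finset.sum_nonneg fun k _ => Real.rpow_nonneg (hμ k) _
  have hμ1 : ∀ k, μ k ≤ 1 := by
    intro k
    rw [← hμs]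
    exact Finset.single_le_sum (fun i _ => hμ i) (Finset.mem_univ k)
  have hμq1 : ∀ k, μ k ^ q ≤ 1 := fun k => Real.rpow_le_one (hμ k) (hμ1 k) hq0.le
  set n : ℝ := (d:ℝ) * (d:ℝ) with hn
  have hn0 : 0 < n := by positivity
  have hKn : n * (1/n) ^ (1/q) = K := by
    have e2 : n = (d:ℝ) ^ (2:ℝ) := by
      rw [show (2:ℝ) = ((2:ℕ):ℝ) by norm_num, Real.rpow_natCast, pow_two]
    calc n * (1/n) ^ (1/q)
        = (d:ℝ) ^ (2:ℝ) * ((d:ℝ) ^ (-(2:ℝ))) ^ (1/q) := by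
          rw [e2, one_div, ← Real.rpow_neg hD.le]
      _ = (d:ℝ) ^ (2:ℝ) * (d:ℝ) ^ ((-(2:ℝ)) * (1/q)) := by
          rw [← Real.rpow_mul hD.le]
      _ = (d:ℝ) ^ ((2:ℝ) + (-(2:ℝ)) * (1/q)) := by
          rw [Real.rpow_add hD]
      _ = K := by
          rw [hK]; congr 1; field_simp; ring
  have hwsum : ∑ _p : Fin d × Fin d, (1/n) = 1 := by
    rw [Finset.sum_const, Finset.card_univ, nsmul_eq_mul]
    have : ((Fintype.card (Fin d × Fin d) : ℕ) : ℝ) = n := by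
      simp [Fintype.card_prod, hn]
    rw [this]; field_simp
  -- analysis of an arbitrary member of the set
  have hS : ∀ x ∈ { x : ℝ | ∃ eA eB : Fin d → Fin d → ℂ,
        (∀ i j, (∑ a, (starRingEnd ℂ) (eA i a) * eA j a) = if i = j then 1 else 0) ∧
        (∀ i j, (∑ a, (starRingEnd ℂ) (eB i a) * eB j a) = if i = j then 1 else 0) ∧
        x = (1 / (1 - q)) * (1 - ∑ i, ∑ j,
            ((∑ a : Fin d × Fin d, ∑ c : Fin d × Fin d,
              (starRingEnd ℂ) (eA i a.1 * eB j a.2) * ρq a c * (eA i c.1 * eB j c.2)).re)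
              ^ (1 / q)) },
      x ≤ c * (1 - K * T ^ (1/q)) ∧ min (c * (1 - n)) c ≤ x := by
    rintro x ⟨eA, eB, hA, hB, rfl⟩
    obtain ⟨w, hw0, hwrow, hwcol, hent⟩ := tsallis_key_aux d q U hU μ ρq hρq eA eB hA hB
    set y : Fin d × Fin d → ℝ := fun p => ∑ k, μ k ^ q * w p k with hy
    have hsum_eq : (∑ i, ∑ j,
          ((∑ a : Fin d × Fin d, ∑ c : Fin d × Fin d,
            (starRingEnd ℂ) (eA i a.1 * eB j a.2) * ρq a c * (eA i c.1 * eB j c.2)).re)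
            ^ (1 / q))
        = ∑ p : Fin d × Fin d, y p ^ (1/q) := by
      rw [Fintype.sum_prod_type]
      refine Finset.sum_congr rfl fun i _ => Finset.sum_congr rfl fun j _ => ?_
      congr 1
      exact hent (i, j)
    have hy0 : ∀ p, 0 ≤ y p := fun p =>
      Finset.sum_nonneg fun k _ => mul_nonneg (Real.rpow_nonneg (hμ k) q) (hw0 p k)
    have hy1 : ∀ p, y p ≤ 1 := by
      intro p
      calc y p ≤ ∑ k, 1 * w p k :=
            Finset.sum_le_sum fun k _ => mul_le_mul_of_nonneg_right (hμq1 k) (hw0 p k)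
        _ = 1 := by simp only [one_mul]; exact hwrow p
    have hysum : ∑ p, y p = T := by
      rw [hy, hT, Finset.sum_comm]
      exact Finset.sum_congr rfl fun k _ => by rw [← Finset.mul_sum, hwcol k, mul_one]
    set s : ℝ := ∑ p : Fin d × Fin d, y p ^ (1/q) with hs
    have hs0 : 0 ≤ s := Finset.sum_nonneg fun p _ => Real.rpow_nonneg (hy0 p) _
    have hs_le_n : s ≤ n := by
      have h1 : s ≤ ∑ _p : Fin d × Fin d, (1:ℝ) :=
        Finset.sum_le_sum fun p _ => Real.rpow_le_one (hy0 p) (hy1 p) hr0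
      have h2 : ∑ _p : Fin d × Fin d, (1:ℝ) = n := by
        rw [Finset.sum_const, Finset.card_univ, nsmul_eq_mul, mul_one]
        simp [Fintype.card_prod, hn]
      linarith
    rw [hsum_eq]
    constructor
    · rcases hq with ⟨hq1, hq2⟩ | ⟨hq1, hq2⟩
      · -- 0 < q < 1 : convexity gives s ≥ K T^{1/q}
        have hr : (1:ℝ) ≤ 1/q := by rw [le_div_iff₀ hq0]; linarith
        have hpm := Real.rpow_arith_mean_le_arith_mean_rpow Finset.univ (fun _ => 1/n) y
          (fun i _ => by positivity) hwsum (fun i _ => hy0 i) hr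
        rw [← Finset.mul_sum, ← Finset.mul_sum, hysum,
          Real.mul_rpow (by positivity) hT0] at hpm
        have hs_ge : K * T ^ (1/q) ≤ s := by
          calc K * T ^ (1/q) = n * ((1/n) ^ (1/q) * T ^ (1/q)) := by rw [← hKn]; ring
            _ ≤ n * ((1/n) * s) := mul_le_mul_of_nonneg_left hpm hn0.le
            _ = s := by field_simp
        have hc0 : 0 ≤ c := by
          rw [hc]; have : 0 < 1 - q := by linarith
          positivity
        exact mul_le_mul_of_nonneg_left (by linarith) hc0
      · -- 1 < q ≤ 2 : concavity gives s ≤ K T^{1/q}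
        have hpm := Real.arith_mean_le_rpow_mean Finset.univ (fun _ => 1/n)
          (fun p => y p ^ (1/q)) (fun i _ => by positivity) hwsum
          (fun i _ => Real.rpow_nonneg (hy0 i) _) hq1.le
        have hyq : ∀ i : Fin d × Fin d, (y i ^ (1/q)) ^ q = y i := fun i => by
          rw [← Real.rpow_mul (hy0 i), one_div, inv_mul_cancel₀ hq0', Real.rpow_one]
        simp only [hyq] at hpm
        rw [← Finset.mul_sum, ← Finset.mul_sum, hysum,
          Real.mul_rpow (by positivity) hT0] at hpm
        have hs_le : s ≤ K * T ^ (1/q) := by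
          calc s = n * ((1/n) * s) := by field_simp
            _ ≤ n * ((1/n) ^ (1/q) * T ^ (1/q)) := mul_le_mul_of_nonneg_left hpm hn0.le
            _ = K * T ^ (1/q) := by rw [← hKn]; ring
        have hc0 : c ≤ 0 := by
          rw [hc]
          have h1 : 1 - q < 0 := by linarith
          exact (div_neg_of_pos_of_neg one_pos h1).le
        exact mul_le_mul_of_nonpos_left (by linarith) hc0
    · rcases le_or_gt 0 c with h | h
      · exact le_trans (min_le_left _ _) (mul_le_mul_of_nonneg_left (by linarith) h)
      · refine le_trans (min_le_right _ _) ?_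
        have := mul_le_mul_of_nonpos_left (show 1 - s ≤ 1 by linarith) h.le
        linarith
  -- the standard product basis gives a member
  have horth : ∀ i j : Fin d,
      (∑ a, (starRingEnd ℂ) ((fun i a => if i = a then (1:ℂ) else 0) i a)
        * (fun i a => if i = a then (1:ℂ) else 0) j a) = if i = j then 1 else 0 := by
    intro i j
    simp [apply_ite (starRingEnd ℂ), ite_mul, Finset.sum_ite_eq]
  set x₀ : ℝ := c * (1 - ∑ i, ∑ j,
      ((∑ a : Fin d × Fin d, ∑ c : Fin d × Fin d,
        (starRingEnd ℂ) ((if i = a.1 then (1:ℂ) else 0) * (if j = a.2 then (1:ℂ) else 0))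
          * ρq a c * ((if i = c.1 then (1:ℂ) else 0) * (if j = c.2 then (1:ℂ) else 0))).re)
        ^ (1 / q)) with hx₀
  have hmem : x₀ ∈ { x : ℝ | ∃ eA eB : Fin d → Fin d → ℂ,
        (∀ i j, (∑ a, (starRingEnd ℂ) (eA i a) * eA j a) = if i = j then 1 else 0) ∧
        (∀ i j, (∑ a, (starRingEnd ℂ) (eB i a) * eB j a) = if i = j then 1 else 0) ∧
        x = (1 / (1 - q)) * (1 - ∑ i, ∑ j,
            ((∑ a : Fin d × Fin d, ∑ c : Fin d × Fin d,
              (starRingEnd ℂ) (eA i a.1 * eB j a.2) * ρq a c * (eA i c.1 * eB j c.2)).re)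
              ^ (1 / q)) } :=
    ⟨fun i a => if i = a then (1:ℂ) else 0, fun i a => if i = a then (1:ℂ) else 0,
      horth, horth, hx₀⟩
  have hbdd : BddBelow { x : ℝ | ∃ eA eB : Fin d → Fin d → ℂ,
        (∀ i j, (∑ a, (starRingEnd ℂ) (eA i a) * eA j a) = if i = j then 1 else 0) ∧
        (∀ i j, (∑ a, (starRingEnd ℂ) (eB i a) * eB j a) = if i = j then 1 else 0) ∧
        x = (1 / (1 - q)) * (1 - ∑ i, ∑ j,
            ((∑ a : Fin d × Fin d, ∑ c : Fin d × Fin d,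
              (starRingEnd ℂ) (eA i a.1 * eB j a.2) * ρq a c * (eA i c.1 * eB j c.2)).re)
              ^ (1 / q)) } :=
    ⟨min (c * (1 - n)) c, fun x hx => (hS x hx).2⟩
  refine ⟨csInf_le_of_le hbdd hmem (hS _ hmem).1, ?_⟩
  -- second inequality
  rcases hq with ⟨hq1, hq2⟩ | ⟨hq1, hq2⟩
  · have hc0 : 0 ≤ c := by
      rw [hc]; have : 0 < 1 - q := by linarith
      positivity
    have hT1 : 1 ≤ T := by
      rw [hT, ← hμs]
      refine Finset.sum_le_sum fun k _ => ?_
      rcases eq_or_lt_of_le (hμ k) with h | h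
      · rw [← h, Real.zero_rpow hq0']
      · have h2 := Real.rpow_le_rpow_of_exponent_ge h (hμ1 k) hq2.le
        rwa [Real.rpow_one] at h2
    have hT1' : 1 ≤ T ^ (1/q) := by
      have := Real.rpow_le_rpow zero_le_one hT1 hr0
      rwa [Real.one_rpow] at this
    have : K ≤ K * T ^ (1/q) := le_mul_of_one_le_right hK0 hT1'
    exact mul_le_mul_of_nonneg_left (by linarith) hc0
  · have hc0 : c ≤ 0 := by
      rw [hc]
      have h1 : 1 - q < 0 := by linarith
      exact (div_neg_of_pos_of_neg one_pos h1).le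
    have hT1 : T ≤ 1 := by
      rw [hT, ← hμs]
      refine Finset.sum_le_sum fun k _ => ?_
      rcases eq_or_lt_of_le (hμ k) with h | h
      · rw [← h, Real.zero_rpow hq0']
      · have h2 := Real.rpow_le_rpow_of_exponent_ge h (hμ1 k) hq1.le
        rwa [Real.rpow_one] at h2
    have hT1' : T ^ (1/q) ≤ 1 := Real.rpow_le_one hT0 hT1 hr0
    have : K * T ^ (1/q) ≤ K := mul_le_of_le_one_right hK0 hT1'
    exact mul_le_mul_of_nonpos_left (by linarith) hc0
end
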